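/- arXiv:1405.1106 — 6 statements merged into one kernel-verified Lean document; each statement's English description precedes it below -/
import Mathlib

section
/- There exist constants C > 1 and M > 0 such that for all real x > M, (1/C) · e^x/√x ≤ I₀(x) ≤ C · e^x/√x, where I₀ is the modified Bessel function of the first kind of order zero. -/
/-!
Since `(m!)² = (2m)! / C(2m, m)`, the `m`-th term of `I₀(x)` is `c_m · x^{2m}/(2m)!` with
`c_m = C(2m, m)/4^m`, so `I₀` is the Taylor series of `cosh` reweighted by `c_m`, and the
elementary bounds `1/(4m+1) ≤ c_m² ≤ 1/(3m+1)` make `c_m` comparable to `1/√m`. The series of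
`cosh x` has its mass at `m ≈ x/2`: the terms with `4m < x` or `m > x` add up to `O(e^{ax})` for
some `a < 1` (Rankin's trick), and on the remaining range `c_m` is comparable to `1/√x`.
-/

/-- The modified Bessel function of the first kind of order zero,
`I₀(x) = Σ_{m=0}^∞ (x/2)^{2m}/(m!)²`. -/
noncomputable def besselI0 (x : ℝ) : ℝ :=
  ∑' m : ℕ, (x / 2) ^ (2 * m) / ((m.factorial : ℝ)) ^ 2

open Real Filter
open scoped Nat

namespace Nat

theorem centralBinom_sq_mul_le (n : ℕ) : n.centralBinom ^ 2 * (3 * n + 1) ≤ 16 ^ n := by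
  induction n with
  | zero => simp
  | succ n ih =>
    have hpoly : 4 * (2 * n + 1) ^ 2 * (3 * n + 4) ≤ 16 * (n + 1) ^ 2 * (3 * n + 1) := by
      ring_nf; omega
    refine Nat.le_of_mul_le_mul_left ?_ (show 0 < (n + 1) ^ 2 by positivity)
    calc (n + 1) ^ 2 * ((n + 1).centralBinom ^ 2 * (3 * (n + 1) + 1))
        = ((n + 1) * (n + 1).centralBinom) ^ 2 * (3 * n + 4) := by ring
      _ = n.centralBinom ^ 2 * (4 * (2 * n + 1) ^ 2 * (3 * n + 4)) := by
          rw [succ_mul_centralBinom_succ]; ring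
      _ ≤ n.centralBinom ^ 2 * (16 * (n + 1) ^ 2 * (3 * n + 1)) := by gcongr
      _ = 16 * (n + 1) ^ 2 * (n.centralBinom ^ 2 * (3 * n + 1)) := by ring
      _ ≤ 16 * (n + 1) ^ 2 * 16 ^ n := by gcongr
      _ = (n + 1) ^ 2 * 16 ^ (n + 1) := by ring

theorem sixteen_pow_le_mul_centralBinom_sq (n : ℕ) :
    16 ^ n ≤ (4 * n + 1) * n.centralBinom ^ 2 := by
  induction n with
  | zero => simp
  | succ n ih =>
    have hpoly : 16 * (n + 1) ^ 2 * (4 * n + 1) ≤ 4 * (2 * n + 1) ^ 2 * (4 * n + 5) := by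
      ring_nf; omega
    refine Nat.le_of_mul_le_mul_left ?_ (show 0 < (n + 1) ^ 2 by positivity)
    calc (n + 1) ^ 2 * 16 ^ (n + 1) = 16 * (n + 1) ^ 2 * 16 ^ n := by ring
      _ ≤ 16 * (n + 1) ^ 2 * ((4 * n + 1) * n.centralBinom ^ 2) := by gcongr
      _ = n.centralBinom ^ 2 * (16 * (n + 1) ^ 2 * (4 * n + 1)) := by ring
      _ ≤ n.centralBinom ^ 2 * (4 * (2 * n + 1) ^ 2 * (4 * n + 5)) := by gcongr
      _ = ((n + 1) * (n + 1).centralBinom) ^ 2 * (4 * n + 5) := by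
          rw [succ_mul_centralBinom_succ]; ring
      _ = (n + 1) ^ 2 * ((4 * (n + 1) + 1) * (n + 1).centralBinom ^ 2) := by ring

end Nat

theorem centralBinom_div_four_pow_sq (m : ℕ) :
    ((m.centralBinom : ℝ) / 4 ^ m) ^ 2 = m.centralBinom ^ 2 / 16 ^ m := by
  rw [div_pow, ← pow_mul, mul_comm, pow_mul]; norm_num

theorem centralBinom_div_four_pow_le_two_div_sqrt {m : ℕ} {x : ℝ} (hx : 0 < x)
    (hxm : x ≤ 4 * (3 * m + 1)) : (m.centralBinom / 4 ^ m : ℝ) ≤ 2 / √x := by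
  have hsq : ((m.centralBinom : ℝ) / 4 ^ m) ^ 2 * (3 * m + 1) ≤ 1 := by
    rw [centralBinom_div_four_pow_sq, div_mul_eq_mul_div, div_le_one (by positivity)]
    exact_mod_cast Nat.centralBinom_sq_mul_le m
  rw [← pow_le_pow_iff_left₀ (by positivity) (by positivity) two_ne_zero, div_pow 2,
    sq_sqrt hx.le, le_div_iff₀ hx]
  nlinarith

theorem one_div_three_sqrt_le_centralBinom_div_four_pow {m : ℕ} {x : ℝ}
    (hxm : 4 * m + 1 ≤ 9 * x) : 1 / (3 * √x) ≤ (m.centralBinom / 4 ^ m : ℝ) := by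
  have hsq : 1 ≤ (4 * m + 1) * ((m.centralBinom : ℝ) / 4 ^ m) ^ 2 := by
    rw [centralBinom_div_four_pow_sq, mul_div_assoc', le_div_iff₀ (by positivity), one_mul]
    exact_mod_cast Nat.sixteen_pow_le_mul_centralBinom_sq m
  have hx : 0 < x := by nlinarith [(m.cast_nonneg : (0:ℝ) ≤ m)]
  rw [← pow_le_pow_iff_left₀ (by positivity) (by positivity) two_ne_zero, div_pow, mul_pow,
    sq_sqrt hx.le, div_le_iff₀ (by positivity)]
  nlinarith [sq_nonneg ((m.centralBinom : ℝ) / 4 ^ m)]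

theorem besselI0_term_eq_centralBinom_mul (x : ℝ) (m : ℕ) :
    (x / 2) ^ (2 * m) / (m ! : ℝ) ^ 2
      = m.centralBinom / 4 ^ m * (x ^ (2 * m) / (2 * m)!) := by
  have hfact : (m.centralBinom * m ! * m ! : ℝ) = (2 * m)! := by
    have h := Nat.choose_mul_factorial_mul_factorial (by omega : m ≤ 2 * m)
    rw [show 2 * m - m = m by omega, ← Nat.centralBinom_eq_two_mul_choose] at h
    exact_mod_cast h
  have := Nat.centralBinom_pos m
  rw [← hfact, div_pow, pow_mul 2, show (2:ℝ) ^ 2 = 4 by norm_num]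
  field_simp

theorem centralBinom_div_four_pow_le_one (m : ℕ) : (m.centralBinom / 4 ^ m : ℝ) ≤ 1 := by
  rw [div_le_one (by positivity)]
  exact_mod_cast Nat.centralBinom_le_four_pow m

theorem besselI0_eq_tsum (x : ℝ) :
    besselI0 x = ∑' m, (m.centralBinom / 4 ^ m : ℝ) * (x ^ (2 * m) / (2 * m)!) := by
  simp only [besselI0, ← besselI0_term_eq_centralBinom_mul]

theorem cosh_term_nonneg (x : ℝ) (m : ℕ) : 0 ≤ x ^ (2 * m) / (2 * m)! :=
  div_nonneg ((even_two_mul m).pow_nonneg x) (by positivity)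

theorem summable_besselI0_terms (x : ℝ) :
    Summable fun m => (m.centralBinom / 4 ^ m : ℝ) * (x ^ (2 * m) / (2 * m)!) :=
  (hasSum_cosh x).summable.of_nonneg_of_le
    (fun m => mul_nonneg (by positivity) (cosh_term_nonneg x m))
    fun m => mul_le_of_le_one_left (cosh_term_nonneg x m) (centralBinom_div_four_pow_le_one m)

theorem cosh_le_exp {x : ℝ} (hx : 0 ≤ x) : cosh x ≤ exp x := by
  rw [cosh_eq]
  linarith [exp_le_exp.2 (show -x ≤ x by linarith)]

-- Rankin's trick: `hs` says that the weight `exp t * r ^ (2 * m)` is at least `1` on `s`.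
theorem tsum_indicator_cosh_terms_le (s : Set ℕ) (x : ℝ) {r t : ℝ} (hr : 0 < r)
    (hs : ∀ m ∈ s, 0 ≤ t + 2 * m * log r) :
    ∑' m, s.indicator (fun m => x ^ (2 * m) / (2 * m)!) m ≤ exp t * cosh (r * x) := by
  have hterm : ∀ m, s.indicator (fun m => x ^ (2 * m) / (2 * m)!) m
      ≤ exp t * ((r * x) ^ (2 * m) / (2 * m)!) := by
    intro m
    by_cases hm : m ∈ s
    · have hweight : 1 ≤ exp t * r ^ (2 * m) := by
        rw [← exp_log (pow_pos hr _), ← exp_add, log_pow]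
        push_cast
        exact one_le_exp (hs m hm)
      rw [Set.indicator_of_mem hm, mul_pow, mul_div_assoc, ← mul_assoc]
      exact le_mul_of_one_le_left (cosh_term_nonneg x m) hweight
    · rw [Set.indicator_of_notMem hm]
      exact mul_nonneg (exp_pos t).le (cosh_term_nonneg _ m)
  calc _ ≤ ∑' m, exp t * ((r * x) ^ (2 * m) / (2 * m)!) :=
        Summable.tsum_le_tsum hterm ((hasSum_cosh x).summable.indicator s)
          ((hasSum_cosh _).summable.mul_left _)
    _ = exp t * cosh (r * x) := by rw [tsum_mul_left, (hasSum_cosh _).tsum_eq]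

theorem eventually_exp_mul_mul_sqrt_le {a c : ℝ} (ha : a < 1) (hc : 0 < c) :
    ∀ᶠ x in atTop, exp (a * x) * √x ≤ c * exp x := by
  filter_upwards [(isLittleO_pow_exp_pos_mul_atTop 1 (sub_pos.2 ha)).bound hc,
    eventually_ge_atTop 1] with x hlittle hx
  rw [pow_one, norm_of_nonneg (by linarith), norm_of_nonneg (exp_pos _).le] at hlittle
  calc exp (a * x) * √x ≤ exp (a * x) * (c * exp ((1 - a) * x)) := by
        gcongr
        exact ((sqrt_le_left (by linarith)).2 (by nlinarith)).trans hlittle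
    _ = c * exp x := by rw [mul_left_comm, ← exp_add]; ring_nf

theorem besselI0_le_exp_add {x : ℝ} (hx : 0 < x) :
    besselI0 x ≤ exp ((log 2 + 1) / 2 * x) + 2 * (exp x / √x) := by
  set f : ℕ → ℝ := fun m => x ^ (2 * m) / (2 * m)!
  have hf : HasSum f (cosh x) := hasSum_cosh x
  have hf0 (m : ℕ) : 0 ≤ f m := cosh_term_nonneg x m
  set s : Set ℕ := {m | 4 * m < x}
  have hterm (m : ℕ) :
      (m.centralBinom / 4 ^ m : ℝ) * f m ≤ s.indicator f m + 2 / √x * f m := by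
    by_cases hm : m ∈ s
    · rw [Set.indicator_of_mem hm]
      have := mul_le_of_le_one_left (hf0 m) (centralBinom_div_four_pow_le_one m)
      have : 0 ≤ 2 / √x * f m := mul_nonneg (by positivity) (hf0 m)
      linarith
    · rw [Set.indicator_of_notMem hm, zero_add]
      refine mul_le_mul_of_nonneg_right (centralBinom_div_four_pow_le_two_div_sqrt hx ?_) (hf0 m)
      simp only [s, Set.mem_ofPred_eq, not_lt] at hm
      linarith
  have hhead : ∑' m, s.indicator f m ≤ exp ((log 2 + 1) / 2 * x) :=
    calc _ ≤ exp (log 2 / 2 * x) * cosh (1 / 2 * x) :=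
          tsum_indicator_cosh_terms_le s x one_half_pos fun m hm => by
            simp only [s, Set.mem_ofPred_eq] at hm
            rw [one_div, log_inv]
            nlinarith [log_pos one_lt_two]
      _ ≤ exp (log 2 / 2 * x) * exp (1 / 2 * x) := by gcongr; exact cosh_le_exp (by positivity)
      _ = exp ((log 2 + 1) / 2 * x) := by rw [← exp_add]; ring_nf
  have hsummable : Summable fun m => (m.centralBinom / 4 ^ m : ℝ) * f m :=
    summable_besselI0_terms x
  rw [besselI0_eq_tsum]
  calc _ ≤ ∑' m, (s.indicator f m + 2 / √x * f m) :=
        Summable.tsum_le_tsum hterm hsummable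
          ((hf.summable.indicator s).add (hf.summable.mul_left _))
    _ = ∑' m, s.indicator f m + 2 / √x * cosh x := by
        rw [Summable.tsum_add (hf.summable.indicator s) (hf.summable.mul_left _), tsum_mul_left,
          hf.tsum_eq]
    _ ≤ exp ((log 2 + 1) / 2 * x) + 2 / √x * exp x := by
        gcongr; exact cosh_le_exp hx.le
    _ = _ := by ring

theorem cosh_sub_exp_le_mul_besselI0 {x : ℝ} (hx : 1 / 5 ≤ x) :
    cosh x - exp ((2 - 2 * log 2) * x) ≤ 3 * √x * besselI0 x := by
  set f : ℕ → ℝ := fun m => x ^ (2 * m) / (2 * m)!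
  have hf : HasSum f (cosh x) := hasSum_cosh x
  have hf0 (m : ℕ) : 0 ≤ f m := cosh_term_nonneg x m
  set s : Set ℕ := {m | x < m}
  have hterm (m : ℕ) :
      f m ≤ 3 * √x * ((m.centralBinom / 4 ^ m : ℝ) * f m) + s.indicator f m := by
    by_cases hm : m ∈ s
    · rw [Set.indicator_of_mem hm]
      have : 0 ≤ 3 * √x * ((m.centralBinom / 4 ^ m : ℝ) * f m) := by positivity
      linarith
    · rw [Set.indicator_of_notMem hm, add_zero, ← mul_assoc]
      refine le_mul_of_one_le_left (hf0 m) ?_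
      simp only [s, Set.mem_ofPred_eq, not_lt] at hm
      have := one_div_three_sqrt_le_centralBinom_div_four_pow (m := m) (x := x) (by linarith)
      rwa [div_le_iff₀ (by positivity), mul_comm] at this
  have htail : ∑' m, s.indicator f m ≤ exp ((2 - 2 * log 2) * x) :=
    calc _ ≤ exp (-(2 * log 2 * x)) * cosh (2 * x) :=
          tsum_indicator_cosh_terms_le s x two_pos fun m hm => by
            simp only [s, Set.mem_ofPred_eq] at hm
            nlinarith [log_pos one_lt_two]
      _ ≤ exp (-(2 * log 2 * x)) * exp (2 * x) := by gcongr; exact cosh_le_exp (by linarith)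
      _ = exp ((2 - 2 * log 2) * x) := by rw [← exp_add]; ring_nf
  have hsummable : Summable fun m => (m.centralBinom / 4 ^ m : ℝ) * f m :=
    summable_besselI0_terms x
  have hsum : cosh x ≤ 3 * √x * besselI0 x + ∑' m, s.indicator f m := by
    rw [besselI0_eq_tsum, ← tsum_mul_left, ← hf.tsum_eq,
      ← Summable.tsum_add (hsummable.mul_left _) (hf.summable.indicator s)]
    exact Summable.tsum_le_tsum hterm hf.summable
      ((hsummable.mul_left _).add (hf.summable.indicator s))
  linarith

theorem eventually_besselI0_le : ∀ᶠ x in atTop, besselI0 x ≤ 3 * (exp x / √x) := by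
  have ha : (log 2 + 1) / 2 < 1 := by linarith [log_two_lt_d9]
  filter_upwards [eventually_exp_mul_mul_sqrt_le ha one_pos, eventually_gt_atTop 0]
    with x hexp hx
  have : exp ((log 2 + 1) / 2 * x) ≤ exp x / √x := by
    rw [le_div_iff₀ (sqrt_pos.2 hx)]; linarith
  linarith [besselI0_le_exp_add hx]

theorem eventually_le_besselI0 : ∀ᶠ x in atTop, exp x / √x / 8 ≤ besselI0 x := by
  have hb : 2 - 2 * log 2 < 1 := by linarith [log_two_gt_d9]
  filter_upwards [eventually_exp_mul_mul_sqrt_le hb (by norm_num : (0:ℝ) < 1 / 8),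
    eventually_ge_atTop 1] with x hexp hx
  have hexp' : exp ((2 - 2 * log 2) * x) ≤ exp ((2 - 2 * log 2) * x) * √x :=
    le_mul_of_one_le_right (exp_pos _).le (one_le_sqrt.2 hx)
  have hcosh : exp x / 2 ≤ cosh x := by rw [cosh_eq]; linarith [exp_pos (-x)]
  have := cosh_sub_exp_le_mul_besselI0 (x := x) (by linarith)
  rw [div_div, div_le_iff₀ (by positivity)]
  linarith

/-- There exist constants `C > 1` and `M > 0` such that for all real `x > M`,
`(1/C)·e^x/√x ≤ I₀(x) ≤ C·e^x/√x`. -/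
theorem statement6 :
    ∃ C : ℝ, 1 < C ∧ ∃ M : ℝ, 0 < M ∧ ∀ x : ℝ, M < x →
      (1 / C) * (Real.exp x / Real.sqrt x) ≤ besselI0 x ∧
        besselI0 x ≤ C * (Real.exp x / Real.sqrt x) := by
  obtain ⟨M, hM⟩ := eventually_atTop.1 (eventually_le_besselI0.and eventually_besselI0_le)
  refine ⟨8, by norm_num, max M 1, by positivity, fun x hx => ?_⟩
  obtain ⟨hlower, hupper⟩ := hM x ((le_max_left M 1).trans hx.le)
  have : 0 ≤ exp x / √x := by positivity
  constructor <;> linarith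
end

section
/- Fix R > 0 and for k > 0 define y_k(z) = I₀(√k·|z|)/I₀(√k·R) on the closed disk {z ∈ ℂ : |z| ≤ R}. Then: (1) for every k > 0 and every z with |z| ≤ R, e^{−√k·(R−|z|)} ≤ y_k(z); and (2) there exist constants C > 0 and k₀ > 0 (depending only on R) such that for every k ≥ k₀ and every z with |z| ≤ R, y_k(z) ≤ C · k^{1/4} · e^{−√k·(R−|z|)}. -/
/-- `y_k(z) = I₀(√k·|z|)/I₀(√k·R)` on the closed disk of radius `R`. -/
noncomputable def yFun (R k : ℝ) (z : ℂ) : ℝ :=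
  besselI0 (Real.sqrt k * ‖z‖) / besselI0 (Real.sqrt k * R)

/-!
Everything rests on the integral representation `π I₀(x) = ∫₀^π e^{x cos θ} dθ`, obtained by
integrating the exponential series term by term (odd moments of `cos` vanish on `[0, π]`, even
ones are Wallis integrals). Pointwise comparison of the integrands gives `I₀(x) ≤ e^{|x|}` and,
since `(b - a)(cos θ - 1) ≤ 0`, the monotonicity `e^{a-b} I₀(b) ≤ I₀(a)` for `a ≤ b`, which is
the lower bound. For the upper bound, restricting the integral to `[0, b^{-1/2}]`, where
`b cos θ ≥ b - 1/2`, gives `π I₀(b) ≥ e^{b - 1/2} / √b`; with `b = √k R` this is the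
`k^{1/4}` loss.
-/

open Real intervalIntegral
open scoped Nat

lemma summable_besselI0 (x : ℝ) :
    Summable fun m : ℕ => (x / 2) ^ (2 * m) / (m ! : ℝ) ^ 2 := by
  refine Summable.of_nonneg_of_le (fun m => by rw [pow_mul]; positivity) (fun m => ?_)
    (Real.summable_pow_div_factorial ((x / 2) ^ 2))
  have hm : (1 : ℝ) ≤ m ! := mod_cast m.factorial_pos
  rw [pow_mul]
  gcongr
  nlinarith

lemma one_le_besselI0 (x : ℝ) : 1 ≤ besselI0 x := by
  simpa [besselI0] using (summable_besselI0 x).le_tsum 0 fun m _ => by rw [pow_mul]; positivity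

lemma besselI0_pos (x : ℝ) : 0 < besselI0 x := one_pos.trans_le (one_le_besselI0 x)

lemma integral_cos_pow_odd_zero_pi (m : ℕ) : ∫ θ in 0..π, cos θ ^ (2 * m + 1) = 0 := by
  simpa using integral_sin_pow_mul_cos_pow_odd (a := 0) (b := π) 0 m

lemma integral_cos_pow_even_zero_pi (m : ℕ) :
    ∫ θ in 0..π, cos θ ^ (2 * m) = π * (2 * m)! / (4 ^ m * (m ! : ℝ) ^ 2) := by
  induction m with
  | zero => simp
  | succ m ih =>
    rw [Nat.mul_succ, integral_cos_pow, ih]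
    simp only [sin_zero, sin_pi, mul_zero, sub_zero, zero_div, zero_add]
    rw [show 2 * m + 2 = 2 * m + 1 + 1 by ring]
    push_cast [Nat.factorial_succ, pow_succ]
    field_simp
    ring

lemma integral_pow_mul_cos_div_factorial_even (x : ℝ) (m : ℕ) :
    ∫ θ in 0..π, (x * cos θ) ^ (2 * m) / ((2 * m)! : ℝ) =
      π * ((x / 2) ^ (2 * m) / (m ! : ℝ) ^ 2) := by
  simp_rw [mul_pow, integral_div, integral_const_mul,
    integral_cos_pow_even_zero_pi, div_pow, pow_mul]
  field_simp
  norm_num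

lemma integral_pow_mul_cos_div_factorial_odd (x : ℝ) (m : ℕ) :
    ∫ θ in 0..π, (x * cos θ) ^ (2 * m + 1) / ((2 * m + 1)! : ℝ) = 0 := by
  simp_rw [mul_pow, integral_div, integral_const_mul,
    integral_cos_pow_odd_zero_pi, mul_zero, zero_div]

lemma hasSum_integral_pow_mul_cos_div_factorial (x : ℝ) :
    HasSum (fun n : ℕ => ∫ θ in 0..π, (x * cos θ) ^ n / (n ! : ℝ))
      (∫ θ in 0..π, exp (x * cos θ)) := by
  refine hasSum_integral_of_dominated_convergence (fun n _ => |x| ^ n / (n ! : ℝ))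
    (fun n => (Continuous.aestronglyMeasurable (by fun_prop))) (fun n => ?_)
    (.of_forall fun _ _ => Real.summable_pow_div_factorial |x|) intervalIntegrable_const
    (.of_forall fun θ _ => ?_)
  · refine .of_forall fun θ _ => ?_
    rw [norm_div, norm_pow, Real.norm_eq_abs, Real.norm_natCast, abs_mul]
    gcongr
    exact mul_le_of_le_one_right (abs_nonneg x) (abs_cos_le_one θ)
  · rw [Real.exp_eq_exp_ℝ]
    exact NormedSpace.expSeries_div_hasSum_exp (x * cos θ)

theorem pi_mul_besselI0_eq_integral (x : ℝ) : π * besselI0 x = ∫ θ in 0..π, exp (x * cos θ) := by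
  have hodd : ∀ n ∉ Set.range (2 * ·), ∫ θ in 0..π, (x * cos θ) ^ n / (n ! : ℝ) = 0 := by
    intro n hn
    obtain ⟨m, rfl | rfl⟩ := n.even_or_odd'
    · exact absurd ⟨m, rfl⟩ hn
    · exact integral_pow_mul_cos_div_factorial_odd x m
  have heven := ((mul_right_injective₀ two_ne_zero).hasSum_iff hodd).mpr
    (hasSum_integral_pow_mul_cos_div_factorial x)
  simp only [Function.comp_def, integral_pow_mul_cos_div_factorial_even] at heven
  exact ((summable_besselI0 x).hasSum.mul_left π).unique heven

lemma intervalIntegrable_exp_mul_cos (x a b : ℝ) :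
    IntervalIntegrable (fun θ => exp (x * cos θ)) MeasureTheory.volume a b :=
  Continuous.intervalIntegrable (by fun_prop) a b

lemma besselI0_le_exp_abs (x : ℝ) : besselI0 x ≤ exp |x| := by
  refine le_of_mul_le_mul_left ?_ pi_pos
  calc π * besselI0 x = ∫ θ in 0..π, exp (x * cos θ) := pi_mul_besselI0_eq_integral x
    _ ≤ ∫ _ in 0..π, exp |x| := by
      refine integral_mono pi_pos.le (intervalIntegrable_exp_mul_cos x 0 π)
        intervalIntegrable_const fun θ => exp_le_exp.mpr ?_
      calc x * cos θ ≤ |x * cos θ| := le_abs_self _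
        _ ≤ |x| := by
          rw [abs_mul]; exact mul_le_of_le_one_right (abs_nonneg x) (abs_cos_le_one θ)
    _ = π * exp |x| := by simp

lemma exp_sub_mul_besselI0_le {a b : ℝ} (hab : a ≤ b) :
    exp (a - b) * besselI0 b ≤ besselI0 a := by
  refine le_of_mul_le_mul_left ?_ pi_pos
  rw [mul_left_comm, pi_mul_besselI0_eq_integral, pi_mul_besselI0_eq_integral,
    ← integral_const_mul]
  refine integral_mono pi_pos.le ((intervalIntegrable_exp_mul_cos b 0 π).const_mul _)
    (intervalIntegrable_exp_mul_cos a 0 π) fun θ => ?_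
  rw [← exp_add, exp_le_exp]
  nlinarith [cos_le_one θ]

lemma exp_sub_half_div_sqrt_le_pi_mul_besselI0 {b : ℝ} (hb : 1 ≤ b) :
    exp (b - 1 / 2) / √b ≤ π * besselI0 b := by
  have hsb : 1 ≤ √b := one_le_sqrt.mpr hb
  -- Laplace's method: near `θ = 0` the integrand stays above `e^{b - 1/2}` on a window of
  -- width `b^{-1/2}`.
  set ε := (√b)⁻¹
  have hε0 : 0 ≤ ε := by positivity
  have hεπ : ε ≤ π := (inv_le_one_of_one_le₀ hsb).trans (by linarith [pi_gt_three])
  have hbε : b * ε ^ 2 = 1 := by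
    rw [inv_pow, sq_sqrt (by linarith), mul_inv_cancel₀ (by linarith)]
  calc exp (b - 1 / 2) / √b = ∫ _ in 0..ε, exp (b - 1 / 2) := by simp [ε, div_eq_inv_mul]
    _ ≤ ∫ θ in 0..ε, exp (b * cos θ) := by
      refine integral_mono_on hε0 intervalIntegrable_const
        (intervalIntegrable_exp_mul_cos b 0 ε) fun θ hθ => exp_le_exp.mpr ?_
      have hθε : θ ^ 2 ≤ ε ^ 2 := pow_le_pow_left₀ hθ.1 hθ.2 2
      nlinarith [one_sub_sq_div_two_le_cos (x := θ)]
    _ ≤ ∫ θ in 0..π, exp (b * cos θ) :=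
      integral_mono_interval le_rfl hε0 hεπ (.of_forall fun θ => (exp_pos _).le)
        (intervalIntegrable_exp_mul_cos b 0 π)
    _ = π * besselI0 b := (pi_mul_besselI0_eq_integral b).symm

lemma exp_neg_sqrt_mul_sub_norm_le_yFun {R k : ℝ} {z : ℂ} (hz : ‖z‖ ≤ R) :
    exp (-√k * (R - ‖z‖)) ≤ yFun R k z := by
  rw [yFun, le_div_iff₀ (besselI0_pos _), show -√k * (R - ‖z‖) = √k * ‖z‖ - √k * R by ring]
  exact exp_sub_mul_besselI0_le (mul_le_mul_of_nonneg_left hz (sqrt_nonneg k))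

lemma yFun_le {R k : ℝ} (z : ℂ) (hkR : 1 ≤ √k * R) :
    yFun R k z ≤ π * exp (1 / 2) * √(√k * R) * exp (-√k * (R - ‖z‖)) := by
  rw [show -√k * (R - ‖z‖) = √k * ‖z‖ - √k * R by ring]
  set a := √k * ‖z‖
  set b := √k * R
  have hnum : besselI0 a ≤ exp a := by
    have ha : |a| = a := abs_of_nonneg (mul_nonneg (sqrt_nonneg k) (norm_nonneg z))
    simpa only [ha] using besselI0_le_exp_abs a
  have hden : exp (b - 1 / 2) / (π * √b) ≤ besselI0 b := by
    rw [mul_comm π, ← div_div, div_le_iff₀ pi_pos, mul_comm]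
    exact exp_sub_half_div_sqrt_le_pi_mul_besselI0 hkR
  calc yFun R k z ≤ exp a / (exp (b - 1 / 2) / (π * √b)) :=
        div_le_div₀ (exp_pos a).le hnum (by positivity) hden
    _ = π * exp (1 / 2) * √b * exp (a - b) := by
      rw [exp_sub, exp_sub]
      field_simp

/-- Fix `R > 0` and for `k > 0` define `y_k(z) = I₀(√k·|z|)/I₀(√k·R)` on `{|z| ≤ R}`.  Then:
(1) for every `k > 0` and `|z| ≤ R`, `e^{−√k·(R−|z|)} ≤ y_k(z)`; and
(2) there are `C > 0`, `k₀ > 0` (depending only on `R`) such that for every `k ≥ k₀` and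
`|z| ≤ R`, `y_k(z) ≤ C·k^{1/4}·e^{−√k·(R−|z|)}`. -/
theorem statement8 (R : ℝ) (hR : 0 < R) :
    (∀ k : ℝ, 0 < k → ∀ z : ℂ, ‖z‖ ≤ R →
      Real.exp (-(Real.sqrt k) * (R - ‖z‖)) ≤ yFun R k z) ∧
    (∃ C : ℝ, 0 < C ∧ ∃ k₀ : ℝ, 0 < k₀ ∧ ∀ k : ℝ, k₀ ≤ k → ∀ z : ℂ, ‖z‖ ≤ R →
      yFun R k z ≤ C * k ^ ((1 : ℝ) / 4) * Real.exp (-(Real.sqrt k) * (R - ‖z‖))) := by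
  refine ⟨fun k _ z hz => exp_neg_sqrt_mul_sub_norm_le_yFun hz,
    π * exp (1 / 2) * √R, by positivity, 1 / R ^ 2, by positivity, fun k hk z _ => ?_⟩
  have hk0 : 0 ≤ k := (by positivity : (0 : ℝ) ≤ 1 / R ^ 2).trans hk
  have hkR : 1 ≤ √k * R := by
    have h := sqrt_le_sqrt hk
    rw [sqrt_div' _ (sq_nonneg R), sqrt_one, sqrt_sq hR.le, div_le_iff₀ hR] at h
    exact h
  have hroot : √(√k * R) = k ^ ((1 : ℝ) / 4) * √R := by
    rw [sqrt_mul (sqrt_nonneg k), sqrt_eq_rpow, sqrt_eq_rpow, ← rpow_mul hk0]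
    norm_num
  calc yFun R k z ≤ π * exp (1 / 2) * √(√k * R) * exp (-√k * (R - ‖z‖)) := yFun_le z hkR
    _ = π * exp (1 / 2) * √R * k ^ ((1 : ℝ) / 4) * exp (-√k * (R - ‖z‖)) := by
      rw [hroot]; ring
end

section
/- Let n ≥ 4 be an even integer, m = n/2, and M ≥ 0. There exists a constant C > 0, depending only on n and M, such that for every t > 0 and all positive real numbers A₁, …, A_m satisfying (i) t²/A₁² − A₁/A₂ + (n−1)M ≥ 0, (ii) A_{j−1}/A_j − A_j/A_{j+1} + (n+1−2j)M ≥ 0 for all j with 1 < j < m, and (iii) A_{m−1}/A_m − A_m² + M ≥ 0, one has A_m² ≤ C + t^{2/n}. -/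
set_option maxHeartbeats 1600000 in
/-- Telescoping estimate from the maximum principle for the `n`-cyclic Hitchin system:
under the hypotheses (i)–(iii) on the positive maxima `A₁, …, A_m` (`m = n/2`), one gets
`A_m² ≤ C + t^{2/n}` for a constant `C` depending only on `n` and `M`. -/
theorem statement12 (n : ℕ) (hn : 4 ≤ n) (hev : Even n) (M : ℝ) (hM : 0 ≤ M) :
    ∃ C : ℝ, 0 < C ∧
      ∀ t : ℝ, 0 < t → ∀ A : ℕ → ℝ,
      (∀ j : ℕ, 1 ≤ j → j ≤ n / 2 → 0 < A j) →
      (t ^ 2 / (A 1) ^ 2 - A 1 / A 2 + ((n : ℝ) - 1) * M ≥ 0) →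
      (∀ j : ℕ, 1 < j → j < n / 2 →
        A (j - 1) / A j - A j / A (j + 1) + ((n : ℝ) + 1 - 2 * (j : ℝ)) * M ≥ 0) →
      (A (n / 2 - 1) / A (n / 2) - (A (n / 2)) ^ 2 + M ≥ 0) →
      (A (n / 2)) ^ 2 ≤ C + t ^ ((2 : ℝ) / n) := by
  refine ⟨(n : ℝ) ^ 2 * M + 1, by positivity, ?_⟩
  intro t ht A hA h1 h2 h3
  obtain ⟨m, hmdef⟩ : ∃ m, n / 2 = m := ⟨_, rfl⟩
  rw [hmdef] at hA h2 h3 ⊢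
  have hnm : n = 2 * m := by
    obtain ⟨k, hk⟩ := hev; omega
  have hm2 : 2 ≤ m := by omega
  have htpow : 0 < t ^ ((2 : ℝ) / n) := Real.rpow_pos_of_pos ht _
  by_cases hcase : (A m) ^ 2 ≤ (n : ℝ) ^ 2 * M + 1
  · linarith
  push_neg at hcase
  obtain ⟨S, hSdef⟩ : ∃ S : ℝ, S = (A m) ^ 2 - (n : ℝ) ^ 2 * M := ⟨_, rfl⟩
  have hS1 : 1 < S := by rw [hSdef]; linarith
  have hS0 : 0 < S := by linarith
  -- key downward induction on the ratios
  have key : ∀ d : ℕ, d < m - 1 →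
      (A m) ^ 2 - (n : ℝ) * ((d : ℝ) + 1) * M ≤ A (m - 1 - d) / A (m - d) := by
    intro d
    induction d with
    | zero =>
      intro _
      have e1 : m - 0 = m := by omega
      simp only [Nat.cast_zero, e1, Nat.sub_zero]
      have hn1 : (1 : ℝ) ≤ (n : ℝ) := by exact_mod_cast (by omega : 1 ≤ n)
      nlinarith [h3]
    | succ d ih =>
      intro hd
      have hd' : d < m - 1 := by omega
      have ihd := ih hd'
      -- apply h2 at j = m - 1 - d
      have hj1 : 1 < m - 1 - d := by omega
      have hj2 : m - 1 - d < m := by omega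
      have h2' := h2 (m - 1 - d) hj1 hj2
      have e1 : m - 1 - d - 1 = m - 1 - (d + 1) := by omega
      have e2 : m - 1 - d + 1 = m - d := by omega
      have e3 : m - (d + 1) = m - 1 - d := by omega
      rw [e1, e2] at h2'
      have hcoef : ((n : ℝ) + 1 - 2 * ((m - 1 - d : ℕ) : ℝ)) ≤ (n : ℝ) := by
        have : (2 : ℝ) ≤ ((m - 1 - d : ℕ) : ℝ) := by
          exact_mod_cast (by omega : 2 ≤ m - 1 - d)
        linarith
      have hcoefM : ((n : ℝ) + 1 - 2 * ((m - 1 - d : ℕ) : ℝ)) * M ≤ (n : ℝ) * M :=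
        mul_le_mul_of_nonneg_right hcoef hM
      rw [e3]
      push_cast
      nlinarith [h2', ihd, hcoefM]
  -- ratios are at least S
  have hnm' : (m : ℝ) ≤ (n : ℝ) := by exact_mod_cast (by omega : m ≤ n)
  have ratioS : ∀ d : ℕ, d < m - 1 → S ≤ A (m - 1 - d) / A (m - d) := by
    intro d hd
    have hkey := key d hd
    have hdm : ((d : ℝ) + 1) ≤ (m : ℝ) := by
      have : (d : ℝ) + 1 ≤ ((m - 1 : ℕ) : ℝ) := by
        exact_mod_cast (by omega : d + 1 ≤ m - 1)
      have : ((m - 1 : ℕ) : ℝ) ≤ (m : ℝ) := by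
        exact_mod_cast (by omega : m - 1 ≤ m)
      linarith [ (by exact_mod_cast (by omega : d + 1 ≤ m - 1) : (d:ℝ) + 1 ≤ ((m-1:ℕ):ℝ)) ]
    have hcM : (n : ℝ) * ((d : ℝ) + 1) * M ≤ (n : ℝ) ^ 2 * M := by
      have hn0 : (0 : ℝ) ≤ (n : ℝ) := by positivity
      have h9 : (n : ℝ) * ((d : ℝ) + 1) ≤ (n : ℝ) * (n : ℝ) :=
        mul_le_mul_of_nonneg_left (hdm.trans hnm') hn0
      have h10 := mul_le_mul_of_nonneg_right h9 hM
      nlinarith [h10]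
    rw [hSdef]
    linarith
  -- product lower bound : S^d * A m ≤ A (m - d)
  have prod : ∀ d : ℕ, d ≤ m - 1 → S ^ d * A m ≤ A (m - d) := by
    intro d
    induction d with
    | zero => intro _; simp
    | succ d ih =>
      intro hd
      have hd' : d ≤ m - 1 := by omega
      have ihd := ih hd'
      have hdd : d < m - 1 := by omega
      have hr := ratioS d hdd
      have e1 : m - 1 - d = m - (d + 1) := by omega
      rw [e1] at hr
      have hApos : 0 < A (m - d) := hA _ (by omega) (by omega)
      have h5 : S * A (m - d) ≤ A (m - (d + 1)) :=
        (le_div_iff₀ hApos).mp hr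
      calc S ^ (d + 1) * A m = S * (S ^ d * A m) := by ring
        _ ≤ S * A (m - d) := by
            exact mul_le_mul_of_nonneg_left ihd (le_of_lt hS0)
        _ ≤ A (m - (d + 1)) := h5
  -- A 1 ≥ S^(m-1) * A m
  have hA1 : S ^ (m - 1) * A m ≤ A 1 := by
    have := prod (m - 1) le_rfl
    have e : m - (m - 1) = 1 := by omega
    rwa [e] at this
  -- from (i) and key at d = m-2 : S ≤ t^2 / A1^2
  have hA12 : S ≤ t ^ 2 / (A 1) ^ 2 := by
    have hk := key (m - 2) (by omega)
    have e1 : m - 1 - (m - 2) = 1 := by omega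
    have e2 : m - (m - 2) = 2 := by omega
    rw [e1, e2] at hk
    have hm2' : ((m - 2 : ℕ) : ℝ) = (m : ℝ) - 2 := by
      push_cast [Nat.cast_sub (by omega : 2 ≤ m)]; ring
    rw [hm2'] at hk
    have hn0 : (0 : ℝ) ≤ (n : ℝ) := by positivity
    have hbound : (n : ℝ) * ((m : ℝ) - 2 + 1) * M + ((n : ℝ) - 1) * M ≤ (n : ℝ) ^ 2 * M := by
      have h9 : (n : ℝ) * ((m : ℝ) - 2 + 1) ≤ (n : ℝ) * ((n : ℝ) - 1) :=
        mul_le_mul_of_nonneg_left (by linarith) hn0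
      have h10 := mul_le_mul_of_nonneg_right h9 hM
      nlinarith [h10]
    rw [hSdef]
    linarith [h1]
  -- conclude t^2 ≥ S^n
  have hAm : 0 < A m := hA m (by omega) le_rfl
  have hA1pos : 0 < A 1 := hA 1 le_rfl (by omega)
  have ht2 : S * (A 1) ^ 2 ≤ t ^ 2 := by
    rw [← le_div_iff₀ (by positivity)]
    exact hA12
  have hA1sq : (S ^ (m - 1) * A m) ^ 2 ≤ (A 1) ^ 2 := by
    have h0 : 0 ≤ S ^ (m - 1) * A m := by positivity
    nlinarith
  have hSn : S ^ n ≤ t ^ 2 := by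
    have hAmS : S ≤ (A m) ^ 2 := by rw [hSdef]; nlinarith
    have en : n = (m - 1) * 2 + 2 := by omega
    have h7 : S ^ n ≤ S * (A 1) ^ 2 := by
      calc S ^ n = S * ((S ^ (m - 1)) ^ 2 * S) := by rw [en]; ring
        _ ≤ S * ((S ^ (m - 1)) ^ 2 * (A m) ^ 2) := by
            have : (S ^ (m - 1)) ^ 2 * S ≤ (S ^ (m - 1)) ^ 2 * (A m) ^ 2 :=
              mul_le_mul_of_nonneg_left hAmS (by positivity)
            exact mul_le_mul_of_nonneg_left this (le_of_lt hS0)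
        _ = S * (S ^ (m - 1) * A m) ^ 2 := by ring
        _ ≤ S * (A 1) ^ 2 :=
            mul_le_mul_of_nonneg_left hA1sq (le_of_lt hS0)
    linarith
  -- finish: S ≤ t^(2/n)
  have hnR : (0 : ℝ) < (n : ℝ) := by positivity
  have hfinal : S ≤ t ^ ((2 : ℝ) / n) := by
    have h8 : (S ^ n : ℝ) ^ ((1 : ℝ) / n) ≤ (t ^ 2 : ℝ) ^ ((1 : ℝ) / n) :=
      Real.rpow_le_rpow (by positivity) hSn (by positivity)
    have hS : (S ^ n : ℝ) ^ ((1 : ℝ) / n) = S := by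
      rw [← Real.rpow_natCast S n, ← Real.rpow_mul (le_of_lt hS0)]
      rw [mul_one_div, div_self (ne_of_gt hnR), Real.rpow_one]
    have hT : (t ^ 2 : ℝ) ^ ((1 : ℝ) / n) = t ^ ((2 : ℝ) / n) := by
      rw [← Real.rpow_natCast t 2, ← Real.rpow_mul (le_of_lt ht)]
      norm_num
      rw [div_eq_mul_inv]
    rw [hS, hT] at h8
    exact h8
  have : (A m) ^ 2 = S + (n : ℝ) ^ 2 * M := by rw [hSdef]; ring
  linarith
end

section
/- Let n ≥ 6 be an even integer, m = n/2, and M ≥ 0. There exists a constant C > 0, depending only on n and M, such that whenever positive real numbers B₁, …, B_{m−1} and A₁, …, A_m satisfy (i) B₁ − B₂ ≤ 4M, (ii) B_j − B_{j+1} ≤ 2M + B_{j−1} − B_j for all j with 1 < j < m−1, (iii) B_{m−1} − A_m² ≤ 2M + B_{m−2} − B_{m−1}, and (iv) A_j ≤ B_j · A_{j+1} for all 1 ≤ j ≤ m−1, then B_j ≤ A_m² + C for all 1 ≤ j ≤ m−1, and A_j ≤ (A_m² + C)^{(n+1−2j)/2} for all 1 ≤ j ≤ m. -/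
/-- Bound on the maxima `A_j = max e^{u^j}` and `B_j = max e^{u^j − u^{j+1}}` of the metric
error functions for the `n`-cyclic Hitchin system (`m = n/2`): under hypotheses (i)–(iv)
one has `B_j ≤ A_m² + C` for `1 ≤ j ≤ m−1`, and `A_j ≤ (A_m² + C)^{(n+1−2j)/2}` for
`1 ≤ j ≤ m`, for a constant `C` depending only on `n` and `M`. -/
theorem statement13 (n : ℕ) (hn : 6 ≤ n) (hev : Even n) (M : ℝ) (hM : 0 ≤ M) :
    ∃ C : ℝ, 0 < C ∧
      ∀ B A : ℕ → ℝ,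
      (∀ j : ℕ, 1 ≤ j → j ≤ n / 2 - 1 → 0 < B j) →
      (∀ j : ℕ, 1 ≤ j → j ≤ n / 2 → 0 < A j) →
      (B 1 - B 2 ≤ 4 * M) →
      (∀ j : ℕ, 1 < j → j < n / 2 - 1 → B j - B (j + 1) ≤ 2 * M + B (j - 1) - B j) →
      (B (n / 2 - 1) - (A (n / 2)) ^ 2 ≤ 2 * M + B (n / 2 - 2) - B (n / 2 - 1)) →
      (∀ j : ℕ, 1 ≤ j → j ≤ n / 2 - 1 → A j ≤ B j * A (j + 1)) →
      (∀ j : ℕ, 1 ≤ j → j ≤ n / 2 - 1 → B j ≤ (A (n / 2)) ^ 2 + C) ∧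
      (∀ j : ℕ, 1 ≤ j → j ≤ n / 2 →
        A j ≤ ((A (n / 2)) ^ 2 + C) ^ (((n : ℝ) + 1 - 2 * (j : ℝ)) / 2)) := by
  refine ⟨M * (n : ℝ) ^ 2 + 1, by positivity, ?_⟩
  intro B A hB hA h1 h2 h3 h4
  set m := n / 2 with hmdef
  have h2m : 2 * m = n := by
    have := (even_iff_two_dvd.mp hev)
    omega
  have hm3 : 3 ≤ m := by omega
  have hnr : (n : ℝ) = 2 * (m : ℝ) := by exact_mod_cast (h2m.symm ▸ rfl : (n:ℕ) = 2*m)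
  have hmr3 : (3 : ℝ) ≤ (m : ℝ) := by exact_mod_cast hm3
  -- Step bound for consecutive differences
  have hD : ∀ j : ℕ, 1 ≤ j → j ≤ m - 2 → B j - B (j + 1) ≤ 2 * M * ((j : ℝ) + 1) := by
    intro j hj1
    induction j, hj1 using Nat.le_induction with
    | base => intro _; push_cast; linarith
    | succ j hj ih =>
      intro hjle
      have hih := ih (by omega)
      have hstep := h2 (j + 1) (by omega) (by omega)
      have he : j + 1 - 1 = j := by omega
      rw [he] at hstep
      push_cast
      push_cast at hih
      linarith
  -- The last difference
  have hDm : B (m - 1) - (A m) ^ 2 ≤ 2 * M * (m : ℝ) := by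
    have hd := hD (m - 2) (by omega) (le_refl _)
    have he : m - 2 + 1 = m - 1 := by omega
    rw [he] at hd
    have hc : ((m - 2 : ℕ) : ℝ) = (m : ℝ) - 2 := by
      rw [Nat.cast_sub (by omega)]; norm_num
    rw [hc] at hd
    linarith
  -- Cumulative bound
  have hQ : ∀ k : ℕ, ∀ j : ℕ, j + k = m - 1 → 1 ≤ j →
      B j - (A m) ^ 2 ≤ 2 * M * ((k : ℝ) + 1) * (m : ℝ) := by
    intro k
    induction k with
    | zero =>
      intro j hj hj1
      have : j = m - 1 := by omega
      rw [this]
      push_cast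
      linarith
    | succ k ih =>
      intro j hj hj1
      have hih := ih (j + 1) (by omega) (by omega)
      have hd := hD j hj1 (by omega)
      have hjm : (j : ℝ) + 1 ≤ (m : ℝ) := by exact_mod_cast (show j + 1 ≤ m by omega)
      have h1' : 2 * M * ((j : ℝ) + 1) ≤ 2 * M * (m : ℝ) := by nlinarith
      push_cast
      push_cast at hih
      linarith
  have hm0 : (0 : ℝ) ≤ (m : ℝ) := by positivity
  have hBbound : ∀ j : ℕ, 1 ≤ j → j ≤ m - 1 →
      B j ≤ (A m) ^ 2 + (M * (n : ℝ) ^ 2 + 1) := by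
    intro j hj1 hjm
    have hq := hQ (m - 1 - j) j (by omega) hj1
    have hk : ((m - 1 - j : ℕ) : ℝ) + 1 ≤ (m : ℝ) := by
      exact_mod_cast (show (m - 1 - j) + 1 ≤ m by omega)
    have hk0 : (0 : ℝ) ≤ ((m - 1 - j : ℕ) : ℝ) + 1 := by positivity
    have hmm : 0 ≤ M * (m : ℝ) * (m : ℝ) := by positivity
    have hkey : 2 * M * (((m - 1 - j : ℕ) : ℝ) + 1) * (m : ℝ) ≤ 2 * M * (m : ℝ) * (m : ℝ) :=
      mul_le_mul_of_nonneg_right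
        (mul_le_mul_of_nonneg_left hk (by linarith : (0:ℝ) ≤ 2 * M)) hm0
    have : 2 * M * (((m - 1 - j : ℕ) : ℝ) + 1) * (m : ℝ) ≤ M * (n : ℝ) ^ 2 := by
      rw [hnr]; nlinarith
    linarith
  refine ⟨hBbound, ?_⟩
  -- Second part
  set x := (A m) ^ 2 + (M * (n : ℝ) ^ 2 + 1) with hxdef
  have hAm : 0 < A m := hA m (by omega) (le_refl _)
  have hx1 : 1 < x := by nlinarith
  have hx0 : 0 < x := by linarith
  have hR : ∀ k : ℕ, ∀ j : ℕ, j + k = m → 1 ≤ j → A j ≤ x ^ k * A m := by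
    intro k
    induction k with
    | zero =>
      intro j hj _
      have : j = m := by omega
      rw [this]; simp
    | succ k ih =>
      intro j hj hj1
      have hih := ih (j + 1) (by omega) (by omega)
      have h4' := h4 j hj1 (by omega)
      have hBj := hBbound j hj1 (by omega)
      have hA1 : 0 < A (j + 1) := hA (j + 1) (by omega) (by omega)
      have : B j * A (j + 1) ≤ x * (x ^ k * A m) :=
        mul_le_mul hBj hih hA1.le hx0.le
      calc A j ≤ B j * A (j + 1) := h4'
        _ ≤ x * (x ^ k * A m) := this
        _ = x ^ (k + 1) * A m := by rw [pow_succ]; ring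
  intro j hj1 hjm
  have hr := hR (m - j) j (by omega) hj1
  have hAmx : A m ≤ x ^ ((1 : ℝ) / 2) := by
    rw [← Real.sqrt_eq_rpow]
    have hx : A m ^ 2 ≤ x := by rw [hxdef]; nlinarith
    exact (Real.le_sqrt hAm.le hx0.le).mpr hx
  have hpow : x ^ (m - j) * A m ≤ x ^ (((n : ℝ) + 1 - 2 * (j : ℝ)) / 2) := by
    have h1 : x ^ (m - j) * A m ≤ x ^ (m - j) * x ^ ((1 : ℝ) / 2) :=
      mul_le_mul_of_nonneg_left hAmx (by positivity)
    have h2' : x ^ (m - j) * x ^ ((1 : ℝ) / 2) = x ^ (((m - j : ℕ) : ℝ) + 1 / 2) := by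
      rw [← Real.rpow_natCast x (m - j), ← Real.rpow_add hx0]
    have h3' : ((m - j : ℕ) : ℝ) + 1 / 2 = ((n : ℝ) + 1 - 2 * (j : ℝ)) / 2 := by
      rw [Nat.cast_sub (by omega : j ≤ m), hnr]; ring
    rw [h2', h3'] at h1
    exact h1
  exact hr.trans hpow
end

section
/- Let n ≥ 1 be an integer and L > 0. There exist constants C > 0 and ε₀ > 0, depending only on n and L, with the following property: for any real numbers ν₁, …, ν_n with ν₁ = max_j ν_j, any continuous B : [0,L] → M_n(ℝ) with ε := sup_{s ∈ [0,L], i,j} |B(s)_{ij}| ≤ ε₀, and any differentiable Φ : [0,L] → M_n(ℝ) with Φ(0) = Id and Φ′(s) = (diag(ν₁,…,ν_n) + B(s))·Φ(s) for all s ∈ [0,L], one has |Φ(s)_{ij} − δ_{ij} e^{ν_j s}| ≤ C · ε · e^{ν₁ s} for all s ∈ [0,L] and all 1 ≤ i, j ≤ n, where δ_{ij} is the Kronecker delta. -/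
/-!
Fix a column `j` and put `g_i(t) = ∑_k B_ik(t) Φ_kj(t)`. Variation of constants gives
`Φ_ij(s) - δ_ij e^{ν_j s} = ∫₀ˢ e^{ν_i (s-t)} g_i(t) dt`, and since every `ν_i ≤ ν₁` the weight
`e^{-ν₁ s}` dominates all these exponentials:
`e^{-ν₁ s} |Φ_ij(s) - δ_ij e^{ν_j s}| ≤ ε ∫₀ˢ u`, where `u(t) = e^{-ν₁ t} ∑_k |Φ_kj(t)|`.
Summing over `i` yields `u(s) ≤ 1 + nε ∫₀ˢ u`, so by Grönwall `u(s) ≤ e^{nεs} ≤ e` as soon as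
`ε ≤ 1/(nL)`, and the deviation is at most `e L ε e^{ν₁ s}`.
-/

open Set Real Matrix Topology

theorem eq_exp_mul_add_integral_of_hasDerivWithinAt {x g : ℝ → ℝ} {a b c : ℝ} (hab : a ≤ b)
    (hg : ContinuousOn g (Icc a b))
    (hx : ∀ t ∈ Icc a b, HasDerivWithinAt x (c * x t + g t) (Icc a b) t) :
    x b = exp (c * (b - a)) * x a + ∫ t in a..b, exp (c * (b - t)) * g t := by
  have hp : ∀ t ∈ Icc a b, HasDerivWithinAt (fun t => exp (-(c * t)) * x t)
      (exp (-(c * t)) * g t) (Icc a b) t := by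
    intro t ht
    have he : HasDerivAt (fun t => exp (-(c * t))) (-c * exp (-(c * t))) t := by
      simpa [mul_comm] using ((hasDerivAt_id t).const_mul c).neg.exp
    exact (he.hasDerivWithinAt.mul (hx t ht)).congr_deriv (by ring)
  have hftc := intervalIntegral.integral_eq_sub_of_hasDerivAt_of_le hab
    (fun t ht => (hp t ht).continuousWithinAt)
    (fun t ht => (hp t (Ioo_subset_Icc_self ht)).hasDerivAt (Icc_mem_nhds ht.1 ht.2))
    ((ContinuousOn.mul (by fun_prop) hg).intervalIntegrable_of_Icc hab)
  have hexp : ∀ t, exp (c * (b - t)) = exp (c * b) * exp (-(c * t)) := by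
    intro t; rw [← exp_add]; congr 1; ring
  have hinv : exp (c * b) * exp (-(c * b)) = 1 := by rw [← exp_add]; simp
  simp_rw [hexp, mul_assoc, intervalIntegral.integral_const_mul, hftc]
  linear_combination (-x b) * hinv

theorem exp_neg_mul_abs_integral_exp_mul_le {g : ℝ → ℝ} {a b c d : ℝ} (hab : a ≤ b)
    (hcd : c ≤ d) (hg : ContinuousOn g (Icc a b)) :
    exp (-(d * b)) * |∫ t in a..b, exp (c * (b - t)) * g t| ≤
      ∫ t in a..b, exp (-(d * t)) * |g t| := by
  calc exp (-(d * b)) * |∫ t in a..b, exp (c * (b - t)) * g t|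
      = |∫ t in a..b, exp (-(d * b)) * (exp (c * (b - t)) * g t)| := by
        rw [intervalIntegral.integral_const_mul, abs_mul, abs_of_pos (exp_pos _)]
    _ ≤ ∫ t in a..b, |exp (-(d * b)) * (exp (c * (b - t)) * g t)| :=
        intervalIntegral.abs_integral_le_integral_abs hab
    _ ≤ ∫ t in a..b, exp (-(d * t)) * |g t| := by
        refine intervalIntegral.integral_mono_on hab ?_ ?_ fun t ht => ?_
        · exact (ContinuousOn.abs (by fun_prop)).intervalIntegrable_of_Icc hab
        · exact (ContinuousOn.mul (by fun_prop) hg.abs).intervalIntegrable_of_Icc hab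
        rw [abs_mul, abs_mul, abs_of_pos (exp_pos _), abs_of_pos (exp_pos _), ← mul_assoc,
          ← exp_add]
        gcongr
        nlinarith [ht.2]

theorem add_mul_gronwallBound_zero (δ K x : ℝ) :
    δ + K * gronwallBound 0 K δ x = δ * exp (K * x) := by
  rcases eq_or_ne K 0 with rfl | hK
  · simp
  · rw [gronwallBound_of_K_ne_0 hK]
    field_simp
    ring

theorem le_mul_exp_of_le_add_mul_integral {φ : ℝ → ℝ} {a b δ K : ℝ} (hK : 0 ≤ K)
    (hφ : ContinuousOn φ (Icc a b)) (h : ∀ t ∈ Icc a b, φ t ≤ δ + K * ∫ x in a..t, φ x) :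
    ∀ t ∈ Icc a b, φ t ≤ δ * exp (K * (t - a)) := by
  have hprim : ∀ t ∈ Ico a b,
      HasDerivWithinAt (fun t => ∫ x in a..t, φ x) (φ t) (Ici t) t := by
    intro t ht
    have hmem : Icc a b ∈ 𝓝[>] t := Icc_mem_nhdsGT_of_mem ht
    exact intervalIntegral.integral_hasDerivWithinAt_right
      ((hφ.mono (Icc_subset_Icc_right ht.2.le)).intervalIntegrable_of_Icc ht.1)
      ⟨Icc a b, hmem, hφ.aestronglyMeasurable measurableSet_Icc⟩
      ((hφ t (Ico_subset_Icc_self ht)).mono_of_mem_nhdsWithin hmem)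
  have hcont : ContinuousOn (fun t => ∫ x in a..t, φ x) (Icc a b) := by
    rcases le_or_gt a b with hab | hba
    · rw [← uIcc_of_le hab]
      exact intervalIntegral.continuousOn_primitive_interval
        (by rw [uIcc_of_le hab]; exact hφ.integrableOn_Icc)
    · simp [Icc_eq_empty_of_lt hba]
  have hint := le_gronwallBound_of_liminf_deriv_right_le (f' := φ) (δ := 0) (K := K) (ε := δ)
    hcont (fun t ht r hr => (hprim t ht).liminf_right_slope_le hr) (by simp)
    (fun t ht => by linarith [h t (Ico_subset_Icc_self ht)])
  intro t ht
  calc φ t ≤ δ + K * ∫ x in a..t, φ x := h t ht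
    _ ≤ δ + K * gronwallBound 0 K δ (t - a) := by gcongr; exact hint t ht
    _ = δ * exp (K * (t - a)) := add_mul_gronwallBound_zero δ K (t - a)

theorem ContinuousOn.matrix_entry {X m n : Type*} [TopologicalSpace X] {A : X → Matrix m n ℝ}
    {S : Set X} (hA : ContinuousOn A S) (i : m) (j : n) :
    ContinuousOn (fun x => A x i j) S :=
  fun x hx => (continuous_id.matrix_elem i j).continuousAt.comp_continuousWithinAt (hA x hx)

theorem HasDerivWithinAt.matrix_entry {m n : Type*} [Fintype n] {Φ : ℝ → Matrix m n ℝ}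
    {Φ' : Matrix m n ℝ} {S : Set ℝ} {t : ℝ} (hΦ : HasDerivWithinAt Φ Φ' S t) (i : m) (j : n) :
    HasDerivWithinAt (fun t => Φ t i j) (Φ' i j) S t :=
  hasDerivWithinAt_pi.1 (hasDerivWithinAt_pi.1 hΦ i) j

theorem HasDerivWithinAt.entry_of_diagonal_add_mul {m : Type*} [Fintype m] [DecidableEq m]
    {ν : m → ℝ} {B Φ : ℝ → Matrix m m ℝ} {S : Set ℝ} {t : ℝ}
    (hΦ : HasDerivWithinAt Φ ((diagonal ν + B t) * Φ t) S t) (i j : m) :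
    HasDerivWithinAt (fun t => Φ t i j) (ν i * Φ t i j + ∑ k, B t i k * Φ t k j) S t :=
  (hΦ.matrix_entry i j).congr_deriv (by rw [add_mul, Matrix.add_apply, diagonal_mul, mul_apply])

namespace PerturbedDiagonalODE

variable {m : Type*} [Fintype m] [DecidableEq m] {ν : m → ℝ} {B Φ : ℝ → Matrix m m ℝ}
  {L μ ε : ℝ}
  (hΦ : ∀ s ∈ Icc 0 L, HasDerivWithinAt Φ ((diagonal ν + B s) * Φ s) (Icc 0 L) s)
include hΦ

theorem continuousOn_entry (i j : m) : ContinuousOn (fun t => Φ t i j) (Icc 0 L) :=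
  fun t ht => ((hΦ t ht).entry_of_diagonal_add_mul i j).continuousWithinAt

theorem continuousOn_exp_neg_mul_sum_abs_entry (j : m) :
    ContinuousOn (fun t => exp (-(μ * t)) * ∑ k, |Φ t k j|) (Icc 0 L) :=
  ContinuousOn.mul (by fun_prop)
    (continuousOn_finsetSum _ fun k _ => (continuousOn_entry hΦ k j).abs)

variable (hB : ContinuousOn B (Icc 0 L))
include hB

theorem continuousOn_sum_mul_entry (i j : m) :
    ContinuousOn (fun t => ∑ k, B t i k * Φ t k j) (Icc 0 L) :=
  continuousOn_finsetSum _ fun k _ => (hB.matrix_entry i k).mul (continuousOn_entry hΦ k j)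

variable (hΦ0 : Φ 0 = 1)
include hΦ0

theorem entry_eq_exp_add_integral {s : ℝ} (hs : s ∈ Icc 0 L) (i j : m) :
    Φ s i j = (if i = j then exp (ν j * s) else 0) +
      ∫ t in 0..s, exp (ν i * (s - t)) * ∑ k, B t i k * Φ t k j := by
  have hsub : Icc 0 s ⊆ Icc 0 L := Icc_subset_Icc_right hs.2
  rw [eq_exp_mul_add_integral_of_hasDerivWithinAt hs.1
    ((continuousOn_sum_mul_entry hΦ hB i j).mono hsub)
    fun t ht => ((hΦ t (hsub ht)).entry_of_diagonal_add_mul i j).mono hsub, hΦ0, one_apply]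
  split_ifs with h <;> simp [h]

variable (hν : ∀ i, ν i ≤ μ) (hBε : ∀ s ∈ Icc 0 L, ∀ i j, |B s i j| ≤ ε)
include hν hBε

theorem exp_neg_mul_abs_entry_sub_le {s : ℝ} (hs : s ∈ Icc 0 L) (i j : m) :
    exp (-(μ * s)) * |Φ s i j - (if i = j then exp (ν j * s) else 0)| ≤
      ε * ∫ t in 0..s, exp (-(μ * t)) * ∑ k, |Φ t k j| := by
  have hsub : Icc 0 s ⊆ Icc 0 L := Icc_subset_Icc_right hs.2
  have hg := (continuousOn_sum_mul_entry hΦ hB i j).mono hsub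
  rw [entry_eq_exp_add_integral hΦ hB hΦ0 hs, add_sub_cancel_left,
    ← intervalIntegral.integral_const_mul]
  refine (exp_neg_mul_abs_integral_exp_mul_le hs.1 (hν i) hg).trans ?_
  refine intervalIntegral.integral_mono_on hs.1 ?_ ?_ fun t ht => ?_
  · exact (ContinuousOn.mul (by fun_prop) hg.abs).intervalIntegrable_of_Icc hs.1
  · exact (continuousOn_const.mul ((continuousOn_exp_neg_mul_sum_abs_entry hΦ j).mono
      hsub)).intervalIntegrable_of_Icc hs.1
  have hBΦ : |∑ k, B t i k * Φ t k j| ≤ ε * ∑ k, |Φ t k j| := by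
    rw [Finset.mul_sum]
    refine (Finset.abs_sum_le_sum_abs _ _).trans (Finset.sum_le_sum fun k _ => ?_)
    rw [abs_mul]
    exact mul_le_mul_of_nonneg_right (hBε t (hsub ht) i k) (abs_nonneg _)
  rw [mul_left_comm]
  gcongr

theorem exp_neg_mul_sum_abs_entry_le_one_add_integral {s : ℝ} (hs : s ∈ Icc 0 L) (j : m) :
    exp (-(μ * s)) * ∑ i, |Φ s i j| ≤
      1 + Fintype.card m * ε * ∫ t in 0..s, exp (-(μ * t)) * ∑ k, |Φ t k j| := by
  have hsum : ∑ i, |Φ s i j| ≤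
      ∑ i, |Φ s i j - (if i = j then exp (ν j * s) else 0)| + exp (ν j * s) := by
    calc ∑ i, |Φ s i j|
        ≤ ∑ i, (|Φ s i j - (if i = j then exp (ν j * s) else 0)| +
            |if i = j then exp (ν j * s) else 0|) :=
          Finset.sum_le_sum fun i _ => by
            linarith [abs_sub_abs_le_abs_sub (Φ s i j) (if i = j then exp (ν j * s) else 0)]
      _ = _ := by rw [Finset.sum_add_distrib]; simp [apply_ite, abs_of_pos (exp_pos _)]
  calc exp (-(μ * s)) * ∑ i, |Φ s i j|
      ≤ exp (-(μ * s)) * ∑ i, |Φ s i j - (if i = j then exp (ν j * s) else 0)| +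
          exp (ν j * s + -(μ * s)) := by
        rw [exp_add, mul_comm (exp (ν j * s)), ← mul_add]
        gcongr
    _ ≤ ∑ _i : m, ε * (∫ t in 0..s, exp (-(μ * t)) * ∑ k, |Φ t k j|) + 1 :=
        add_le_add ((Finset.mul_sum _ _ _).trans_le (Finset.sum_le_sum fun i _ =>
            exp_neg_mul_abs_entry_sub_le hΦ hB hΦ0 hν hBε hs i j))
          (exp_le_one_iff.2 (by nlinarith [hν j, hs.1]))
    _ = 1 + Fintype.card m * ε * ∫ t in 0..s, exp (-(μ * t)) * ∑ k, |Φ t k j| := by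
        simp only [Finset.sum_const, Finset.card_univ, nsmul_eq_mul]
        ring

theorem exp_neg_mul_sum_abs_entry_le (hε : 0 ≤ ε) {s : ℝ} (hs : s ∈ Icc 0 L) (j : m) :
    exp (-(μ * s)) * ∑ k, |Φ s k j| ≤ exp (Fintype.card m * ε * s) := by
  simpa [mul_assoc] using le_mul_exp_of_le_add_mul_integral (by positivity)
    (continuousOn_exp_neg_mul_sum_abs_entry hΦ j)
    (fun t ht => exp_neg_mul_sum_abs_entry_le_one_add_integral hΦ hB hΦ0 hν hBε ht j) s hs

theorem abs_entry_sub_le (hε : 0 ≤ ε) (hεL : Fintype.card m * ε * L ≤ 1) {s : ℝ}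
    (hs : s ∈ Icc 0 L) (i j : m) :
    |Φ s i j - (if i = j then exp (ν j * s) else 0)| ≤ exp 1 * L * ε * exp (μ * s) := by
  have hu : ∫ t in 0..s, exp (-(μ * t)) * ∑ k, |Φ t k j| ≤ exp 1 * L := by
    calc ∫ t in 0..s, exp (-(μ * t)) * ∑ k, |Φ t k j|
        ≤ ∫ _t in 0..s, exp 1 := by
          refine intervalIntegral.integral_mono_on hs.1 ?_ intervalIntegrable_const fun t ht => ?_
          · exact ((continuousOn_exp_neg_mul_sum_abs_entry hΦ j).mono
              (Icc_subset_Icc_right hs.2)).intervalIntegrable_of_Icc hs.1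
          have htL : t ≤ L := ht.2.trans hs.2
          refine (exp_neg_mul_sum_abs_entry_le hΦ hB hΦ0 hν hBε hε ⟨ht.1, htL⟩ j).trans ?_
          gcongr
          nlinarith [mul_le_mul_of_nonneg_left htL (by positivity : (0 : ℝ) ≤ Fintype.card m * ε)]
      _ = s * exp 1 := by simp
      _ ≤ exp 1 * L := by nlinarith [exp_pos 1, hs.2]
  calc |Φ s i j - (if i = j then exp (ν j * s) else 0)|
      = exp (-(μ * s)) * |Φ s i j - (if i = j then exp (ν j * s) else 0)| * exp (μ * s) := by
        rw [mul_right_comm, ← exp_add, neg_add_cancel, exp_zero, one_mul]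
    _ ≤ ε * (exp 1 * L) * exp (μ * s) := by
        gcongr ?_ * _
        exact (exp_neg_mul_abs_entry_sub_le hΦ hB hΦ0 hν hBε hs i j).trans (by gcongr)
    _ = exp 1 * L * ε * exp (μ * s) := by ring

end PerturbedDiagonalODE

theorem statement18_general (n : ℕ) [NeZero n] (L : ℝ) (hL : 0 < L) :
    ∃ C : ℝ, 0 < C ∧ ∃ ε₀ : ℝ, 0 < ε₀ ∧
      ∀ ν : Fin n → ℝ, (∀ j, ν j ≤ ν 0) →
      ∀ B : ℝ → Matrix (Fin n) (Fin n) ℝ, ContinuousOn B (Icc 0 L) →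
      ∀ ε : ℝ, 0 ≤ ε → ε ≤ ε₀ →
      (∀ s ∈ Icc (0 : ℝ) L, ∀ i j : Fin n, |B s i j| ≤ ε) →
      ∀ Φ : ℝ → Matrix (Fin n) (Fin n) ℝ, Φ 0 = 1 →
      (∀ s ∈ Icc (0 : ℝ) L,
        HasDerivWithinAt Φ ((Matrix.diagonal ν + B s) * Φ s) (Icc 0 L) s) →
      ∀ s ∈ Icc (0 : ℝ) L, ∀ i j : Fin n,
        |Φ s i j - (if i = j then Real.exp (ν j * s) else 0)| ≤ C * ε * Real.exp (ν 0 * s) := by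
  have hn : (0 : ℝ) < n := Nat.cast_pos.2 (NeZero.pos n)
  refine ⟨exp 1 * L, by positivity, (n * L)⁻¹, by positivity, ?_⟩
  intro ν hν B hB ε hε hεε₀ hBε Φ hΦ0 hΦ s hs i j
  have hεL : Fintype.card (Fin n) * ε * L ≤ 1 := by
    rw [Fintype.card_fin]
    calc n * ε * L ≤ n * (n * L)⁻¹ * L := by gcongr
      _ = 1 := by field_simp
  exact PerturbedDiagonalODE.abs_entry_sub_le hΦ hB hΦ0 hν hBε hε hεL hs i j

/-- Entrywise estimate for the perturbed diagonal linear ODE arising in the WKB analysis: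
there are `C > 0`, `ε₀ > 0` depending only on `n` and `L` such that for any `ν₁,…,ν_n` with
`ν₁ = max_j ν_j` (here `ν 0` plays the role of `ν₁`), any continuous `B` with
`|B(s)_{ij}| ≤ ε ≤ ε₀`, and any `Φ` with `Φ(0) = Id` and
`Φ′(s) = (diag(ν₁,…,ν_n) + B(s))Φ(s)`, one has
`|Φ(s)_{ij} − δ_{ij} e^{ν_j s}| ≤ C ε e^{ν₁ s}`. -/
theorem statement18 (n : ℕ) [NeZero n] (hn : 1 ≤ n) (L : ℝ) (hL : 0 < L) :
    ∃ C : ℝ, 0 < C ∧ ∃ ε₀ : ℝ, 0 < ε₀ ∧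
      ∀ ν : Fin n → ℝ, (∀ j, ν j ≤ ν 0) →
      ∀ B : ℝ → Matrix (Fin n) (Fin n) ℝ, ContinuousOn B (Icc 0 L) →
      ∀ ε : ℝ, 0 ≤ ε → ε ≤ ε₀ →
      (∀ s ∈ Icc (0 : ℝ) L, ∀ i j : Fin n, |B s i j| ≤ ε) →
      ∀ Φ : ℝ → Matrix (Fin n) (Fin n) ℝ, Φ 0 = 1 →
      (∀ s ∈ Icc (0 : ℝ) L,
        HasDerivWithinAt Φ ((Matrix.diagonal ν + B s) * Φ s) (Icc 0 L) s) →
      ∀ s ∈ Icc (0 : ℝ) L, ∀ i j : Fin n,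
        |Φ s i j - (if i = j then Real.exp (ν j * s) else 0)| ≤ C * ε * Real.exp (ν 0 * s) :=
  statement18_general n L hL
end

section
/- Let n ≥ 1 be an integer, L > 0, μ₁, …, μ_n real numbers with μ₁ = max_j μ_j, and C > 0. There exist K > 1 and t₀ > 0 such that for every t ≥ t₀ the following holds: if B : [0,L] → M_n(ℝ) is continuous with |B(s)_{ij}| ≤ C·t^{−1/n} for all s, i, j, and Φ : [0,L] → M_n(ℝ) is differentiable with Φ(0) = Id and Φ′(s) = (t^{1/n}·diag(μ₁,…,μ_n) + B(s))·Φ(s) for all s ∈ [0,L], then the spectral radius ρ of the matrix Φ(L) satisfies (1/K)·e^{L t^{1/n} μ₁} ≤ ρ ≤ K·e^{L t^{1/n} μ₁}. -/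
open Set

attribute [local instance] Matrix.linftyOpNormedAddCommGroup Matrix.linftyOpNormedRing
  Matrix.linftyOpNormedAlgebra

/-!
Multiplying `Φ s` by `exp (-t^{1/n} μ₁ s)` turns the equation into `u' = (D + B) u`, `u 0 = 1`,
with `D = diag (t^{1/n} (μ_j - μ₁)) ≤ 0`. Variation of constants, entry by entry, bounds
`‖u x - exp (x D)‖` by `n ∫₀ˣ ‖B u‖`, because the factors `exp ((x - r) D)` have entries in
`[0, 1]`; Grönwall's inequality then gives `‖u L - exp (L D)‖ ≤ exp (n² C t^{-1/n} L) - 1`,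
which is small for large `t` (all norms are ℓ^∞ operator norms). Since `exp (L D)` is diagonal
with entries in `(0, 1]` and a `1` in the position of `μ₁`, the trace of `u L` is at least `1/2`,
so some eigenvalue of `u L` has modulus at least `1/(2n)`, while all are bounded by `‖u L‖ ≤ 2`.
-/

open Filter Topology Matrix Real

namespace Matrix

theorem smul_diagonal_sub_smul_one {ι : Type*} [DecidableEq ι] (p : ℝ) (μ : ι → ℝ) (i₀ : ι) :
    p • diagonal μ - (p * μ i₀) • (1 : Matrix ι ι ℝ) = diagonal fun i => p * (μ i - μ i₀) := by
  ext i j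
  by_cases hij : i = j <;> simp [hij]
  ring

variable {ι α : Type*} [Fintype ι]

theorem norm_apply_le_linfty_opNorm [NormedAddCommGroup α] (A : Matrix ι ι α) (i j : ι) :
    ‖A i j‖ ≤ ‖A‖ := by
  rw [← coe_nnnorm, ← coe_nnnorm, NNReal.coe_le_coe, linfty_opNNNorm_def]
  exact (Finset.single_le_sum (fun _ _ => zero_le) (Finset.mem_univ j)).trans
    (Finset.le_sup (f := fun i => ∑ j, ‖A i j‖₊) (Finset.mem_univ i))

theorem linfty_opNorm_le_card_mul [NormedAddCommGroup α] {A : Matrix ι ι α} {c : ℝ}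
    (h : ∀ i j, ‖A i j‖ ≤ c) : ‖A‖ ≤ Fintype.card ι * c := by
  rcases isEmpty_or_nonempty ι with hι | ⟨⟨i⟩⟩
  · simp [Subsingleton.elim A 0, norm_zero]
  lift c to NNReal using (norm_nonneg _).trans (h i i)
  rw [← coe_nnnorm, linfty_opNNNorm_def, ← nsmul_eq_mul, ← NNReal.coe_nsmul, NNReal.coe_le_coe]
  exact Finset.sup_le fun i _ => Finset.sum_le_card_nsmul _ _ _ fun j _ => h i j

theorem linfty_opNorm_map_ofReal (A : Matrix ι ι ℝ) : ‖A.map Complex.ofReal‖ = ‖A‖ := by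
  simp [linfty_opNorm_def, Complex.nnnorm_real]

theorem norm_trace_le_card_mul_linfty_opNorm [NormedAddCommGroup α] (A : Matrix ι ι α) :
    ‖A.trace‖ ≤ Fintype.card ι * ‖A‖ :=
  (norm_sum_le _ _).trans <| by
    simpa using Finset.sum_le_card_nsmul Finset.univ _ _ fun i _ =>
      norm_apply_le_linfty_opNorm A i i

theorem exists_mem_spectrum_norm_trace_le {𝕜 : Type*} [NormedField 𝕜] [IsAlgClosed 𝕜]
    [DecidableEq ι] [Nonempty ι] (M : Matrix ι ι 𝕜) :
    ∃ z ∈ spectrum 𝕜 M, ‖M.trace‖ ≤ Fintype.card ι * ‖z‖ := by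
  have hcard : Multiset.card M.charpoly.roots = Fintype.card ι := by
    rw [(IsAlgClosed.splits M.charpoly).natDegree_eq_card_roots.symm, charpoly_natDegree_eq_dim]
  obtain ⟨z, hz, hmax⟩ := M.charpoly.roots.exists_max_image norm
    (Multiset.card_pos.mp (hcard ▸ Fintype.card_pos))
  refine ⟨z, mem_spectrum_iff_isRoot_charpoly.mpr (Polynomial.isRoot_of_mem_roots hz), ?_⟩
  rw [trace_eq_sum_roots_charpoly, ← hcard, ← nsmul_eq_mul]
  exact (norm_multiset_sum_le _).trans <| by
    simpa using Multiset.sum_le_card_nsmul (M.charpoly.roots.map norm) _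
      (Multiset.forall_mem_map_iff.mpr hmax)

variable [DecidableEq ι]

theorem hasDerivWithinAt_apply {u : ℝ → Matrix ι ι ℝ} {u' : Matrix ι ι ℝ} {S : Set ℝ} {s : ℝ}
    (h : HasDerivWithinAt u u' S s) (i j : ι) :
    HasDerivWithinAt (fun r => u r i j) (u' i j) S s :=
  (LinearMap.toContinuousLinearMap (entryLinearMap ℝ ℝ i j)).hasFDerivAt.comp_hasDerivWithinAt s h

variable [Nonempty ι]

theorem exists_mem_spectrum_map_ofReal_le_norm {A : Matrix ι ι ℝ} {v : ι → ℝ} {i₀ : ι}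
    {e δ : ℝ} (he : 0 < e) (hv : ∀ i, 0 ≤ v i) (hv₀ : v i₀ = 1)
    (hA : ‖A - e • diagonal v‖ ≤ e * δ) (hδ : δ ≤ 1 / (2 * Fintype.card ι)) :
    ∃ z ∈ spectrum ℂ (A.map Complex.ofReal), 1 / (2 * Fintype.card ι) * e ≤ ‖z‖ := by
  have hn : (0 : ℝ) < Fintype.card ι := by exact_mod_cast Fintype.card_pos
  have hdiag : e ≤ (e • diagonal v).trace := by
    rw [trace_smul, trace_diagonal, smul_eq_mul]
    calc e = e * v i₀ := by rw [hv₀, mul_one]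
      _ ≤ e * ∑ i, v i := mul_le_mul_of_nonneg_left
          (Finset.single_le_sum (fun i _ => hv i) (Finset.mem_univ i₀)) he.le
  have hR : ‖(A - e • diagonal v).trace‖ ≤ e / 2 := by
    refine (norm_trace_le_card_mul_linfty_opNorm _).trans ?_
    calc Fintype.card ι * ‖A - e • diagonal v‖
        ≤ Fintype.card ι * (e * (1 / (2 * Fintype.card ι))) := by grw [hA, hδ]
      _ = e / 2 := by field_simp
  rw [Real.norm_eq_abs, trace_sub] at hR
  obtain ⟨z, hz, htr⟩ := exists_mem_spectrum_norm_trace_le (A.map Complex.ofReal)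
  refine ⟨z, hz, ?_⟩
  have htrace : e / 2 ≤ ‖(A.map Complex.ofReal).trace‖ := by
    rw [show (A.map Complex.ofReal).trace = A.trace by simp [trace], Complex.norm_real,
      Real.norm_eq_abs]
    linarith [(abs_le.mp hR).1, le_abs_self A.trace]
  rw [div_mul_eq_mul_div, one_mul, div_le_iff₀ (by positivity)]
  linarith

theorem norm_le_of_mem_spectrum_map_ofReal {A : Matrix ι ι ℝ} {v : ι → ℝ} {e δ : ℝ}
    (he : 0 < e) (hv : ‖v‖ ≤ 1) (hA : ‖A - e • diagonal v‖ ≤ e * δ)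
    (hδ : δ ≤ 1 / (2 * Fintype.card ι)) {z : ℂ} (hz : z ∈ spectrum ℂ (A.map Complex.ofReal)) :
    ‖z‖ ≤ 2 * Fintype.card ι * e := by
  have hn : (1 : ℝ) ≤ Fintype.card ι := by exact_mod_cast Fintype.card_pos
  have hdiag : ‖e • diagonal v‖ ≤ e := by
    refine (norm_smul_le e _).trans ?_
    rw [linfty_opNorm_diagonal, Real.norm_of_nonneg he.le]
    exact mul_le_of_le_one_right he.le hv
  calc ‖z‖ ≤ ‖A.map Complex.ofReal‖ := spectrum.norm_le_norm_of_mem hz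
    _ = ‖A‖ := linfty_opNorm_map_ofReal A
    _ ≤ ‖e • diagonal v‖ + ‖A - e • diagonal v‖ := norm_le_insert' _ _
    _ ≤ e + e * (1 / (2 * Fintype.card ι)) := by grw [hdiag, hA, hδ]
    _ ≤ 2 * Fintype.card ι * e := by
        have : 1 / (2 * Fintype.card ι) ≤ (1 : ℝ) := by
          rw [div_le_one (by positivity)]
          linarith
        nlinarith

end Matrix

open intervalIntegral

theorem abs_sub_exp_mul_le_integral_abs {d L x : ℝ} (hd : d ≤ 0) {w g : ℝ → ℝ}
    (hg : ContinuousOn g (Icc 0 L))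
    (hw : ∀ s ∈ Icc 0 L, HasDerivWithinAt w (d * w s + g s) (Icc 0 L) s) (hx : x ∈ Icc 0 L) :
    |w x - exp (d * x) * w 0| ≤ ∫ r in 0..x, |g r| := by
  obtain ⟨hx0, hxL⟩ := hx
  have hsub : Icc 0 x ⊆ Icc 0 L := Icc_subset_Icc_right hxL
  have hwc : ContinuousOn w (Icc 0 L) := fun s hs => (hw s hs).continuousWithinAt
  have hftc : ∫ r in 0..x, exp (-d * r) * g r = exp (-d * x) * w x - w 0 := by
    rw [integral_eq_sub_of_hasDeriv_right_of_le (f := fun r => exp (-d * r) * w r) hx0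
      ((continuous_exp.comp (continuous_const_mul _)).continuousOn.mul (hwc.mono hsub)) ?_ ?_,
      mul_zero, exp_zero, one_mul]
    · intro r hr
      have hw' := (hw r (hsub (Ioo_subset_Icc_self hr))).hasDerivAt
        (Icc_mem_nhds hr.1 (hr.2.trans_le hxL))
      have hexp : HasDerivAt (fun r => exp (-d * r)) (exp (-d * r) * -d) r := by
        simpa using ((hasDerivAt_id r).const_mul (-d)).exp
      exact (hexp.mul hw').hasDerivWithinAt.congr_deriv (by ring)
    · exact ((continuous_exp.comp (continuous_const_mul _)).continuousOn.mul
        (hg.mono hsub)).intervalIntegrable_of_Icc hx0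
  have hrepr : w x - exp (d * x) * w 0 = ∫ r in 0..x, exp (d * (x - r)) * g r := by
    simp_rw [mul_sub, sub_eq_add_neg, exp_add, mul_assoc, integral_const_mul, ← neg_mul, hftc,
      mul_sub, ← mul_assoc, ← exp_add]
    simp [sub_eq_add_neg]
  rw [hrepr, ← Real.norm_eq_abs]
  refine norm_integral_le_of_norm_le hx0 (Eventually.of_forall fun r hr => ?_)
    ((hg.mono hsub).abs.intervalIntegrable_of_Icc hx0)
  rw [Real.norm_eq_abs, abs_mul, abs_of_pos (exp_pos _)]
  exact mul_le_of_le_one_left (abs_nonneg _)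
    (exp_le_one_iff.mpr (mul_nonpos_of_nonpos_of_nonneg hd (by linarith [hr.2])))

theorem integral_le_gronwallBound {φ : ℝ → ℝ} {a k L : ℝ} (hφ : ContinuousOn φ (Icc 0 L))
    (h : ∀ x ∈ Icc 0 L, φ x ≤ a + k * ∫ r in 0..x, φ r) :
    ∀ x ∈ Icc 0 L, ∫ r in 0..x, φ r ≤ gronwallBound 0 k a x := by
  intro x hx
  have hint : ∀ x ∈ Icc 0 L, IntervalIntegrable φ MeasureTheory.volume 0 x := fun x hx =>
    (hφ.mono (Icc_subset_Icc_right hx.2)).intervalIntegrable_of_Icc hx.1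
  have hderiv : ∀ x ∈ Ico 0 L, HasDerivWithinAt (fun y => ∫ r in 0..y, φ r) (φ x) (Ici x) x := by
    intro x hx
    have hmem : Icc 0 L ∈ 𝓝[>] x :=
      mem_nhdsWithin.mpr ⟨Iio L, isOpen_Iio, hx.2, fun y hy => ⟨hx.1.trans hy.2.le, hy.1.le⟩⟩
    exact integral_hasDerivWithinAt_right (hint x (Ico_subset_Icc_self hx))
      ⟨_, hmem, hφ.aestronglyMeasurable measurableSet_Icc⟩
      ((hφ x (Ico_subset_Icc_self hx)).mono_of_mem_nhdsWithin hmem)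
  have hcont : ContinuousOn (fun y => ∫ r in 0..y, φ r) (Icc 0 L) := by
    have hL := uIcc_of_le (hx.1.trans hx.2)
    rw [← hL] at hφ ⊢
    exact continuousOn_primitive_interval hφ.integrableOn_Icc
  simpa using le_gronwallBound_of_liminf_deriv_right_le hcont
    (fun x hx _ hr => (hderiv x hx).liminf_right_slope_le hr) (by simp)
    (fun x hx => (h x (Ico_subset_Icc_self hx)).trans_eq (add_comm _ _)) x hx

theorem mul_gronwallBound_zero_one (k x : ℝ) : k * gronwallBound 0 k 1 x = exp (k * x) - 1 := by
  rcases eq_or_ne k 0 with rfl | hk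
  · simp [gronwallBound_K0]
  · rw [gronwallBound_of_K_ne_0 hk]
    field_simp
    ring

theorem norm_exp_mul_le_one {ι : Type*} [Fintype ι] {d : ι → ℝ} (hd : ∀ i, d i ≤ 0) {x : ℝ}
    (hx : 0 ≤ x) : ‖fun i => exp (d i * x)‖ ≤ 1 :=
  (pi_norm_le_iff_of_nonneg zero_le_one).mpr fun i => by
    rw [Real.norm_eq_abs, abs_of_pos (exp_pos _), exp_le_one_iff]
    exact mul_nonpos_of_nonpos_of_nonneg (hd i) hx

section DiagonalDominatedODE

variable {ι : Type*} [Fintype ι] [DecidableEq ι] {L : ℝ} {d : ι → ℝ}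

theorem norm_sub_diagonal_exp_mul_le (hd : ∀ i, d i ≤ 0) {u F : ℝ → Matrix ι ι ℝ}
    (hF : ContinuousOn F (Icc 0 L))
    (hu : ∀ s ∈ Icc 0 L, HasDerivWithinAt u (diagonal d * u s + F s) (Icc 0 L) s) {x : ℝ}
    (hx : x ∈ Icc 0 L) :
    ‖u x - diagonal (fun i => exp (d i * x)) * u 0‖ ≤ Fintype.card ι * ∫ r in 0..x, ‖F r‖ := by
  refine linfty_opNorm_le_card_mul fun i j => ?_
  have hFij := (continuous_id.matrix_elem i j).comp_continuousOn hF
  have hentry := abs_sub_exp_mul_le_integral_abs (hd i) hFij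
    (fun s hs => by simpa using hasDerivWithinAt_apply (hu s hs) i j) hx
  have hsub : Icc 0 x ⊆ Icc 0 L := Icc_subset_Icc_right hx.2
  simpa using hentry.trans <| integral_mono_on hx.1
    ((hFij.abs.mono hsub).intervalIntegrable_of_Icc hx.1)
    ((hF.norm.mono hsub).intervalIntegrable_of_Icc hx.1)
    fun r hr => norm_apply_le_linfty_opNorm (F r) i j

theorem norm_sub_diagonal_exp_le_of_hasDerivWithinAt {b : ℝ} (hL : 0 ≤ L) (hd : ∀ i, d i ≤ 0)
    {B u : ℝ → Matrix ι ι ℝ} (hB : ContinuousOn B (Icc 0 L)) (hBb : ∀ s ∈ Icc 0 L, ‖B s‖ ≤ b)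
    (hu0 : u 0 = 1)
    (hu : ∀ s ∈ Icc 0 L, HasDerivWithinAt u ((diagonal d + B s) * u s) (Icc 0 L) s) :
    ‖u L - diagonal (fun i => exp (d i * L))‖ ≤ exp (Fintype.card ι * b * L) - 1 := by
  set k := Fintype.card ι * b
  have hb : 0 ≤ b := (norm_nonneg _).trans (hBb 0 ⟨le_rfl, hL⟩)
  have hucont : ContinuousOn u (Icc 0 L) := fun s hs => (hu s hs).continuousWithinAt
  have hdev : ∀ x ∈ Icc 0 L,
      ‖u x - diagonal (fun i => exp (d i * x))‖ ≤ k * ∫ r in 0..x, ‖u r‖ := by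
    intro x hx
    have hsub : Icc 0 x ⊆ Icc 0 L := Icc_subset_Icc_right hx.2
    have hBu : ∀ r ∈ Icc 0 L, ‖B r * u r‖ ≤ b * ‖u r‖ := fun r hr =>
      (linfty_opNorm_mul _ _).trans (mul_le_mul_of_nonneg_right (hBb r hr) (norm_nonneg _))
    calc ‖u x - diagonal (fun i => exp (d i * x))‖
        ≤ Fintype.card ι * ∫ r in 0..x, ‖B r * u r‖ := by
          have h := norm_sub_diagonal_exp_mul_le (F := fun s => B s * u s) hd (hB.mul hucont)
            (fun s hs => (hu s hs).congr_deriv (add_mul _ _ _)) hx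
          rwa [hu0, mul_one] at h
      _ ≤ Fintype.card ι * ∫ r in 0..x, b * ‖u r‖ := by
          gcongr
          exact integral_mono_on hx.1
            ((hB.mul hucont).norm.mono hsub |>.intervalIntegrable_of_Icc hx.1)
            ((hucont.norm.mono hsub).const_mul b |>.intervalIntegrable_of_Icc hx.1)
            fun r hr => hBu r (hsub hr)
      _ = k * ∫ r in 0..x, ‖u r‖ := by rw [integral_const_mul, ← mul_assoc]
  have hnorm : ∀ x ∈ Icc 0 L, ‖u x‖ ≤ 1 + k * ∫ r in 0..x, ‖u r‖ := by
    intro x hx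
    have hdiag : ‖diagonal (fun i => exp (d i * x))‖ ≤ 1 :=
      (linfty_opNorm_diagonal _).trans_le (norm_exp_mul_le_one hd hx.1)
    calc ‖u x‖
        ≤ ‖diagonal (fun i => exp (d i * x))‖ + ‖u x - diagonal (fun i => exp (d i * x))‖ :=
          norm_le_insert' _ _
      _ ≤ 1 + k * ∫ r in 0..x, ‖u r‖ := add_le_add hdiag (hdev x hx)
  have hL' : L ∈ Icc 0 L := ⟨hL, le_rfl⟩
  calc ‖u L - diagonal (fun i => exp (d i * L))‖ ≤ k * ∫ r in 0..L, ‖u r‖ := hdev L hL'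
    _ ≤ k * gronwallBound 0 k 1 L := by
        gcongr
        exact integral_le_gronwallBound hucont.norm hnorm L hL'
    _ = exp (k * L) - 1 := mul_gronwallBound_zero_one k L

end DiagonalDominatedODE

theorem hasDerivWithinAt_exp_neg_mul_smul {𝔸 : Type*} [NormedRing 𝔸] [NormedAlgebra ℝ 𝔸]
    {Φ : ℝ → 𝔸} {A : 𝔸} {S : Set ℝ} {s : ℝ} (c : ℝ) (h : HasDerivWithinAt Φ (A * Φ s) S s) :
    HasDerivWithinAt (fun r => exp (-(c * r)) • Φ r) ((A - c • 1) * (exp (-(c * s)) • Φ s))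
      S s := by
  have hexp : HasDerivAt (fun r => exp (-(c * r))) (exp (-(c * s)) * -c) s := by
    simpa using ((hasDerivAt_id s).const_mul c).neg.exp
  refine (hexp.hasDerivWithinAt.smul h).congr_deriv ?_
  simp only [sub_mul, smul_mul_assoc, one_mul, mul_smul_comm]
  module

theorem norm_sub_smul_diagonal_exp_le {ι : Type*} [Fintype ι] [DecidableEq ι] {L b p : ℝ}
    (hL : 0 ≤ L) (hp : 0 ≤ p) {μ : ι → ℝ} {i₀ : ι} (hμ : ∀ i, μ i ≤ μ i₀)
    {B Φ : ℝ → Matrix ι ι ℝ} (hB : ContinuousOn B (Icc 0 L)) (hBb : ∀ s ∈ Icc 0 L, ‖B s‖ ≤ b)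
    (hΦ0 : Φ 0 = 1)
    (hΦ : ∀ s ∈ Icc 0 L, HasDerivWithinAt Φ ((p • diagonal μ + B s) * Φ s) (Icc 0 L) s) :
    ‖Φ L - exp (L * p * μ i₀) • diagonal (fun i => exp (p * (μ i - μ i₀) * L))‖
      ≤ exp (L * p * μ i₀) * (exp (Fintype.card ι * b * L) - 1) := by
  have hdev := norm_sub_diagonal_exp_le_of_hasDerivWithinAt hL
    (fun i => mul_nonpos_of_nonneg_of_nonpos hp (sub_nonpos.mpr (hμ i))) hB hBb
    (u := fun s => exp (-(p * μ i₀ * s)) • Φ s) (by simp [hΦ0]) fun s hs => by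
      have h := hasDerivWithinAt_exp_neg_mul_smul (p * μ i₀) (hΦ s hs)
      rwa [add_sub_right_comm, smul_diagonal_sub_smul_one] at h
  have hΦL : Φ L = exp (L * p * μ i₀) • exp (-(p * μ i₀ * L)) • Φ L := by
    rw [smul_smul, ← exp_add, show L * p * μ i₀ + -(p * μ i₀ * L) = 0 by ring, exp_zero, one_smul]
  rw [hΦL, ← smul_sub, norm_smul, Real.norm_of_nonneg (exp_pos _).le]
  exact mul_le_mul_of_nonneg_left hdev (exp_pos _).le

theorem eventually_exp_mul_rpow_neg_sub_one_le {a : ℝ} (ha : 0 < a) (c : ℝ) {ε : ℝ}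
    (hε : 0 < ε) : ∀ᶠ t in atTop, exp (c * t ^ (-a)) - 1 ≤ ε := by
  have hlim : Tendsto (fun t : ℝ => exp (c * t ^ (-a)) - 1) atTop (𝓝 0) := by
    simpa using ((continuous_exp.tendsto _).comp
      ((tendsto_rpow_neg_atTop ha).const_mul c)).sub_const 1
  exact hlim.eventually (ge_mem_nhds hε)

theorem statement19_general (n : ℕ) [NeZero n] (L : ℝ) (hL : 0 < L)
    (μ : Fin n → ℝ) (hμ : ∀ j, μ j ≤ μ 0) (C : ℝ) :
    ∃ K : ℝ, 1 < K ∧ ∃ t₀ : ℝ, 0 < t₀ ∧ ∀ t : ℝ, t₀ ≤ t →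
      ∀ B : ℝ → Matrix (Fin n) (Fin n) ℝ, ContinuousOn B (Icc 0 L) →
      (∀ s ∈ Icc (0 : ℝ) L, ∀ i j : Fin n, |B s i j| ≤ C * t ^ (-(1 / (n : ℝ)))) →
      ∀ Φ : ℝ → Matrix (Fin n) (Fin n) ℝ, Φ 0 = 1 →
      (∀ s ∈ Icc (0 : ℝ) L,
        HasDerivWithinAt Φ
          ((t ^ ((1 : ℝ) / n) • Matrix.diagonal μ + B s) * Φ s) (Icc 0 L) s) →
      (∃ lam ∈ spectrum ℂ ((Φ L).map (Complex.ofReal)),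
        (1 / K) * Real.exp (L * t ^ ((1 : ℝ) / n) * μ 0) ≤ ‖lam‖) ∧
      (∀ lam ∈ spectrum ℂ ((Φ L).map (Complex.ofReal)),
        ‖lam‖ ≤ K * Real.exp (L * t ^ ((1 : ℝ) / n) * μ 0)) := by
  have hn : (1 : ℝ) ≤ n := by exact_mod_cast Nat.one_le_iff_ne_zero.mpr (NeZero.ne n)
  obtain ⟨t₀, ht₀⟩ := eventually_atTop.mp <| eventually_exp_mul_rpow_neg_sub_one_le
    (by positivity : (0 : ℝ) < 1 / n) (n * (n * C) * L) (by positivity : (0 : ℝ) < 1 / (2 * n))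
  refine ⟨2 * n, by linarith, max t₀ 1, by positivity, fun t ht B hB hBC Φ hΦ0 hΦ => ?_⟩
  have hp : 0 ≤ t ^ ((1 : ℝ) / n) := rpow_nonneg (by linarith [le_max_right t₀ 1]) _
  have hclose := norm_sub_smul_diagonal_exp_le hL.le hp hμ hB
    (fun s hs => linfty_opNorm_le_card_mul (hBC s hs)) hΦ0 hΦ
  have hδ : exp (Fintype.card (Fin n) * (Fintype.card (Fin n) * (C * t ^ (-(1 / (n : ℝ))))) * L)
      - 1 ≤ 1 / (2 * Fintype.card (Fin n)) := by
    rw [Fintype.card_fin]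
    convert ht₀ t (le_of_max_le_left ht) using 3
    ring
  refine ⟨?_, fun z hz => ?_⟩
  · simpa using exists_mem_spectrum_map_ofReal_le_norm (i₀ := 0) (exp_pos _)
      (fun i => (exp_pos _).le) (by simp) hclose hδ
  · simpa using norm_le_of_mem_spectrum_map_ofReal (exp_pos _) (norm_exp_mul_le_one
      (fun i => mul_nonpos_of_nonneg_of_nonpos hp (sub_nonpos.mpr (hμ i))) hL.le) hclose hδ hz

/-- ODE core of the WKB-exponent theorem: with `μ₁ = max_j μ_j` (here `μ 0` plays the role of
`μ₁`), there are `K > 1`, `t₀ > 0` so that for `t ≥ t₀`: if `|B(s)_{ij}| ≤ C t^{−1/n}`,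
`Φ(0) = Id` and `Φ′(s) = (t^{1/n} diag(μ₁,…,μ_n) + B(s))Φ(s)` on `[0,L]`, then the spectral
radius `ρ` of `Φ(L)` (the maximum of the moduli of its complex eigenvalues) satisfies
`(1/K)e^{L t^{1/n} μ₁} ≤ ρ ≤ K e^{L t^{1/n} μ₁}`. -/
theorem statement19 (n : ℕ) [NeZero n] (hn : 1 ≤ n) (L : ℝ) (hL : 0 < L)
    (μ : Fin n → ℝ) (hμ : ∀ j, μ j ≤ μ 0) (C : ℝ) (hC : 0 < C) :
    ∃ K : ℝ, 1 < K ∧ ∃ t₀ : ℝ, 0 < t₀ ∧ ∀ t : ℝ, t₀ ≤ t →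
      ∀ B : ℝ → Matrix (Fin n) (Fin n) ℝ, ContinuousOn B (Icc 0 L) →
      (∀ s ∈ Icc (0 : ℝ) L, ∀ i j : Fin n, |B s i j| ≤ C * t ^ (-(1 / (n : ℝ)))) →
      ∀ Φ : ℝ → Matrix (Fin n) (Fin n) ℝ, Φ 0 = 1 →
      (∀ s ∈ Icc (0 : ℝ) L,
        HasDerivWithinAt Φ
          ((t ^ ((1 : ℝ) / n) • Matrix.diagonal μ + B s) * Φ s) (Icc 0 L) s) →
      (∃ lam ∈ spectrum ℂ ((Φ L).map (Complex.ofReal)),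
        (1 / K) * Real.exp (L * t ^ ((1 : ℝ) / n) * μ 0) ≤ ‖lam‖) ∧
      (∀ lam ∈ spectrum ℂ ((Φ L).map (Complex.ofReal)),
        ‖lam‖ ≤ K * Real.exp (L * t ^ ((1 : ℝ) / n) * μ 0)) :=
  statement19_general n L hL μ hμ C
end
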